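/- arXiv:2512.24577 — 8 statements merged into one kernel-verified Lean document; each statement's English description precedes it below -/
import Mathlib

section
/- In the Erdős–Rényi random graph G(n, 1/2), for any fixed subset S of the vertex set with |S| even, the probability that the set of odd-degree vertices equals exactly S is 2^{1−n}. -/
open scoped ENNReal

/-- Index type for the potential edges of a simple graph on `Fin n`. -/
abbrev EdgeIdx (n : ℕ) := {p : Fin n × Fin n // p.1 < p.2}

/-- The degree of vertex `u` in the graph described by the edge-indicator `g`. -/
def gDegree (n : ℕ) (g : EdgeIdx n → Bool) (u : Fin n) : ℕ :=
  (Finset.univ.filter fun e : EdgeIdx n => g e = true ∧ (e.1.1 = u ∨ e.1.2 = u)).card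

/-- The set of odd-degree vertices of the graph described by `g`. -/
def oddSet (n : ℕ) (g : EdgeIdx n → Bool) : Finset (Fin n) :=
  Finset.univ.filter fun u => Odd (gDegree n g u)


/-! Fix the edges not at vertex `0` arbitrarily. The edge `{0, u}` affects only the parities of `0`
and `u`, so exactly one choice of the `n - 1` edges at `0` gives every `u ≠ 0` the parity
`[u ∈ S]`. The parity at `0` is then forced by the handshake lemma, and it
agrees with `[0 ∈ S]` because `|S|` is even. Hence `2 ^ (C(n, 2) - (n - 1))` graphs have odd set
`S`. -/

open Finset

lemma forall_eq_iff_forall_ne_of_sum_eq {ι M : Type*} [Fintype ι] [DecidableEq ι]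
    [AddCommGroup M] {f g : ι → M} (h : ∑ i, f i = ∑ i, g i) (a : ι) :
    (∀ i, f i = g i) ↔ ∀ i ≠ a, f i = g i := by
  refine ⟨fun hfg i _ => hfg i, fun hfg i => ?_⟩
  obtain rfl | hi := eq_or_ne i a
  · have hrest : ∑ j ∈ {i}ᶜ, f j = ∑ j ∈ {i}ᶜ, g j :=
      sum_congr rfl fun j hj => hfg j (by simpa using hj)
    rw [Fintype.sum_eq_add_sum_compl i f, Fintype.sum_eq_add_sum_compl i g, hrest] at h
    exact add_right_cancel h
  · exact hfg i hi

lemma Nat.card_fun_determined_by_restrict {α β : Type*} [Finite α] (p : α → Prop)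
    (Φ : ({a // ¬ p a} → β) → {a // p a} → β) :
    Nat.card {g : α → β // ∀ a (ha : p a), g a = Φ (Subtype.restrict _ g) ⟨a, ha⟩} =
      Nat.card β ^ Nat.card {a // ¬ p a} := by
  classical
  let extend (h : {a // ¬ p a} → β) : α → β :=
    fun a => if ha : p a then Φ h ⟨a, ha⟩ else h ⟨a, ha⟩
  have restrict_extend (h) : Subtype.restrict _ (extend h) = h := funext fun b => dif_neg b.2
  rw [← Nat.card_fun]
  refine Nat.card_congr
    { toFun g := Subtype.restrict _ g.1
      invFun h := ⟨extend h, fun a ha => by rw [restrict_extend]; exact dif_pos ha⟩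
      left_inv := fun ⟨g, hg⟩ => Subtype.ext <| funext fun a => ?_
      right_inv := restrict_extend }
  by_cases ha : p a
  · exact (dif_pos ha).trans (hg a ha).symm
  · exact dif_neg ha

namespace EdgeIdx

variable {n : ℕ}

lemma sum_gDegree (g : EdgeIdx n → Bool) : ∑ u, gDegree n g u = 2 * #{e | g e = true} := by
  simp only [gDegree, card_filter]
  rw [sum_comm, mul_sum]
  refine sum_congr rfl fun e _ => ?_
  by_cases he : g e = true
  · simp only [he, true_and]
    rw [← card_filter, filter_or, filter_eq, filter_eq]
    simp [card_pair e.2.ne]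
  · simp [he]

lemma snd_ne_zero [NeZero n] (e : EdgeIdx n) : e.1.2 ≠ 0 :=
  ((Fin.zero_le _).trans_lt e.2).ne'

lemma oddSet_eq_iff_natCast_gDegree (g : EdgeIdx n → Bool) (S : Finset (Fin n)) :
    oddSet n g = S ↔ ∀ u, (gDegree n g u : ZMod 2) = if u ∈ S then 1 else 0 := by
  simp only [Finset.ext_iff, oddSet, mem_filter, mem_univ, true_and]
  refine forall_congr' fun u => ?_
  by_cases hu : u ∈ S
  · simp [hu, ZMod.natCast_eq_one_iff_odd]
  · simp [hu, ZMod.natCast_eq_zero_iff_even]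

variable [NeZero n]

def fromZero (u : Fin n) (hu : u ≠ 0) : EdgeIdx n := ⟨(0, u), (Fin.pos_iff_ne_zero' u).2 hu⟩

lemma fromZero_snd {e : EdgeIdx n} (he : e.1.1 = 0) : fromZero e.1.2 (snd_ne_zero e) = e :=
  Subtype.ext (Prod.ext he.symm rfl)

def offStar (h : {e : EdgeIdx n // ¬ e.1.1 = 0} → Bool) : EdgeIdx n → Bool :=
  fun e => if he : e.1.1 = 0 then false else h ⟨e, he⟩

lemma gDegree_eq_offStar_add (g : EdgeIdx n → Bool) {u : Fin n} (hu : u ≠ 0) :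
    gDegree n g u = gDegree n (offStar (Subtype.restrict _ g)) u +
      if g (fromZero u hu) then 1 else 0 := by
  have key (e : EdgeIdx n) :
      (if g e = true ∧ (e.1.1 = u ∨ e.1.2 = u) then 1 else 0) =
        (if offStar (Subtype.restrict _ g) e = true ∧ (e.1.1 = u ∨ e.1.2 = u) then 1 else 0) +
          if e = fromZero u hu then (if g e then 1 else 0) else 0 := by
    by_cases he : e.1.1 = 0
    · by_cases h2 : e.1.2 = u <;>
        simp [offStar, fromZero, he, h2, Subtype.ext_iff, Prod.ext_iff, hu.symm]
    · have hne : e ≠ fromZero u hu := fun h => he (h ▸ rfl)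
      simp [offStar, he, hne]
  simp only [gDegree, card_filter]
  rw [sum_congr rfl fun e _ => key e, sum_add_distrib, sum_ite_eq']
  simp

lemma natCast_gDegree_eq_iff (g : EdgeIdx n → Bool) {u : Fin n} (hu : u ≠ 0) (y : ZMod 2) :
    (gDegree n g u : ZMod 2) = y ↔
      g (fromZero u hu) = decide (y ≠ gDegree n (offStar (Subtype.restrict _ g)) u) := by
  rw [gDegree_eq_offStar_add g hu]
  push_cast
  generalize (gDegree n (offStar (Subtype.restrict _ g)) u : ZMod 2) = d
  generalize g (fromZero u hu) = b
  revert b d y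
  decide

-- The unique choice of the edges `{0, u}` that gives each `u ≠ 0` the parity `[u ∈ S]`.
def starEdges (S : Finset (Fin n)) (h : {e : EdgeIdx n // ¬ e.1.1 = 0} → Bool)
    (e : {e : EdgeIdx n // e.1.1 = 0}) : Bool :=
  decide ((if e.1.1.2 ∈ S then 1 else 0 : ZMod 2) ≠ gDegree n (offStar h) e.1.1.2)

lemma oddSet_eq_iff {S : Finset (Fin n)} (hS : Even #S) (g : EdgeIdx n → Bool) :
    oddSet n g = S ↔
      ∀ e (he : e.1.1 = 0), g e = starEdges S (Subtype.restrict _ g) ⟨e, he⟩ := by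
  have hsum : ∑ u, (gDegree n g u : ZMod 2) = ∑ u, if u ∈ S then 1 else 0 := by
    rw [← Nat.cast_sum, sum_gDegree, sum_boole, filter_mem_eq_inter, univ_inter,
      ZMod.natCast_eq_zero_iff_even.2 hS]
    exact ZMod.natCast_eq_zero_iff_even.2 (even_two_mul _)
  rw [oddSet_eq_iff_natCast_gDegree, forall_eq_iff_forall_ne_of_sum_eq hsum 0]
  constructor
  · intro h e he
    have := (natCast_gDegree_eq_iff g (snd_ne_zero e) _).1 (h _ (snd_ne_zero e))
    rwa [fromZero_snd he] at this
  · intro h u hu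
    exact (natCast_gDegree_eq_iff g hu _).2 (h (fromZero u hu) rfl)

lemma card_fst_eq_zero : Nat.card {e : EdgeIdx n // e.1.1 = 0} = n - 1 := by
  have : {e : EdgeIdx n // e.1.1 = 0} ≃ {u : Fin n // u ≠ 0} :=
    { toFun e := ⟨e.1.1.2, snd_ne_zero e.1⟩
      invFun u := ⟨fromZero u.1 u.2, rfl⟩
      left_inv e := Subtype.ext (fromZero_snd e.2)
      right_inv _ := rfl }
  rw [Nat.card_congr this]
  simp

lemma card_eq_card_fst_ne_zero_add :
    Nat.card (EdgeIdx n) = Nat.card {e : EdgeIdx n // ¬ e.1.1 = 0} + (n - 1) := by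
  rw [← card_fst_eq_zero, add_comm, ← Nat.card_sum, Nat.card_congr (Equiv.sumCompl _)]

end EdgeIdx

/-- For `G ∼ G(n, 1/2)` (the uniform distribution on simple graphs on
`n` labeled vertices) and any fixed even-size subset `S` of the vertices, the
probability that the odd-degree vertex set of `G` equals `S` is `2^{1−n}`. -/
theorem stmt_3 (n : ℕ) (hn : 1 ≤ n) (S : Finset (Fin n)) (hS : Even S.card) :
    (PMF.uniformOfFintype (EdgeIdx n → Bool)).toOuterMeasure
        {g | oddSet n g = S} = (1 / 2 : ℝ≥0∞) ^ (n - 1) := by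
  have : NeZero n := ⟨by omega⟩
  set m := Nat.card {e : EdgeIdx n // ¬ e.1.1 = 0}
  have hfiber : Nat.card {g | oddSet n g = S} = 2 ^ m := by
    simp_rw [Set.coe_ofPred, EdgeIdx.oddSet_eq_iff hS]
    rw [Nat.card_fun_determined_by_restrict, Nat.card_eq_fintype_card (α := Bool),
      Fintype.card_bool]
  have htotal : Nat.card (EdgeIdx n → Bool) = 2 ^ m * 2 ^ (n - 1) := by
    rw [Nat.card_fun, Nat.card_eq_fintype_card (α := Bool), Fintype.card_bool,
      EdgeIdx.card_eq_card_fst_ne_zero_add, pow_add]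
  rw [PMF.toOuterMeasure_uniformOfFintype_apply, ← Nat.card_eq_fintype_card,
    ← Nat.card_eq_fintype_card, hfiber, htotal]
  push_cast
  nth_rw 1 [← mul_one ((2 : ℝ≥0∞) ^ m)]
  rw [ENNReal.mul_div_mul_left _ _ (by positivity) (by simp), one_div, one_div, ENNReal.inv_pow]
end

section
/- In the Erdős–Rényi random graph G(n, 1/2) with n ≥ 2, the degree parities (deg(v) mod 2) of any fixed set of n−1 vertices are independent, each uniform on {0,1}. -/
open scoped ENNReal

namespace Stmt4

variable {n : ℕ}

/-- The edge between `u` and `w`. -/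
def ew (w u : Fin n) (h : u ≠ w) : EdgeIdx n :=
  if hlt : u < w then ⟨(u, w), hlt⟩ else ⟨(w, u), h.lt_or_gt.resolve_left hlt⟩

/-- `e` touches `w`. -/
def touch (w : Fin n) (e : EdgeIdx n) : Prop := e.1.1 = w ∨ e.1.2 = w

instance (w : Fin n) : DecidablePred (touch w) := fun _ =>
  inferInstanceAs (Decidable (_ ∨ _))

/-- The endpoint of `e` other than `w`. -/
def other (w : Fin n) (e : EdgeIdx n) : Fin n :=
  if e.1.1 = w then e.1.2 else e.1.1

lemma ew_touch (w u : Fin n) (h : u ≠ w) : touch w (ew w u h) := by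
  unfold ew touch; split <;> simp

lemma ew_incident (w u : Fin n) (h : u ≠ w) :
    (ew w u h).1.1 = u ∨ (ew w u h).1.2 = u := by
  unfold ew; split <;> simp

lemma other_ew (w u : Fin n) (h : u ≠ w) : other w (ew w u h) = u := by
  unfold ew
  split_ifs with hlt
  · simp [other, h]
  · simp [other]

lemma other_ne (w : Fin n) (e : EdgeIdx n) (ht : touch w e) : other w e ≠ w := by
  unfold other
  split_ifs with h1
  · exact fun h2 => absurd e.2 (by rw [h1, h2]; exact lt_irrefl w)
  · exact h1

lemma other_incident (w : Fin n) (e : EdgeIdx n) :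
    e.1.1 = other w e ∨ e.1.2 = other w e := by
  unfold other; split
  · right; rfl
  · left; rfl

lemma eq_ew (w u : Fin n) (h : u ≠ w) (e : EdgeIdx n)
    (hi : e.1.1 = u ∨ e.1.2 = u) (ht : touch w e) : e = ew w u h := by
  obtain ⟨⟨a, c⟩, hab⟩ := e
  unfold touch at ht
  simp only at hi ht hab
  unfold ew
  rcases hi with h1 | h1 <;> rcases ht with h2 | h2
  · exact absurd (h1 ▸ h2) h
  · subst h1 h2; rw [dif_pos hab]
  · subst h1 h2; rw [dif_neg (asymm hab)]
  · exact absurd (h1 ▸ h2) h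

/-- Degree among edges not touching `w`. -/
def restDeg (w : Fin n) (g : EdgeIdx n → Bool) (u : Fin n) : ℕ :=
  (Finset.univ.filter fun e : EdgeIdx n =>
    (g e = true ∧ (e.1.1 = u ∨ e.1.2 = u)) ∧ ¬ touch w e).card

lemma cardB (w u : Fin n) (h : u ≠ w) (g : EdgeIdx n → Bool) :
    (Finset.univ.filter fun e : EdgeIdx n =>
        (g e = true ∧ (e.1.1 = u ∨ e.1.2 = u)) ∧ touch w e).card
      = if g (ew w u h) = true then 1 else 0 := by
  split_ifs with hg
  · rw [show (Finset.univ.filter fun e : EdgeIdx n =>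
        (g e = true ∧ (e.1.1 = u ∨ e.1.2 = u)) ∧ touch w e) = {ew w u h} from ?_]
    · simp
    · ext e
      simp only [Finset.mem_filter, Finset.mem_univ, true_and, Finset.mem_singleton]
      constructor
      · rintro ⟨⟨_, hi⟩, ht⟩; exact eq_ew w u h e hi ht
      · rintro rfl; exact ⟨⟨hg, ew_incident w u h⟩, ew_touch w u h⟩
  · rw [Finset.card_eq_zero.mpr]
    ext e
    simp only [Finset.mem_filter, Finset.mem_univ, true_and, Finset.notMem_empty,
      iff_false, not_and]
    rintro ⟨hge, hi⟩ ht
    exact hg ((eq_ew w u h e hi ht) ▸ hge)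

lemma gDegree_eq (w u : Fin n) (h : u ≠ w) (g : EdgeIdx n → Bool) :
    gDegree n g u = restDeg w g u + (if g (ew w u h) = true then 1 else 0) := by
  have key := Finset.card_filter_add_card_filter_not
    (s := Finset.univ.filter fun e : EdgeIdx n =>
      g e = true ∧ (e.1.1 = u ∨ e.1.2 = u)) (p := touch w)
  rw [Finset.filter_filter, Finset.filter_filter] at key
  unfold gDegree restDeg
  rw [← key, cardB w u h g, Nat.add_comm]

/-- Whether to flip the edge from `u` to `w`. -/
def tweak (w : Fin n) (b : Fin n → ZMod 2) (g : EdgeIdx n → Bool) (u : Fin n) : Bool :=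
  decide ((restDeg w g u : ZMod 2) ≠ b u)

/-- Involution flipping edges at `w` according to the rest of the graph. -/
def flip (w : Fin n) (b : Fin n → ZMod 2) (g : EdgeIdx n → Bool) : EdgeIdx n → Bool :=
  fun e => if touch w e then xor (g e) (tweak w b g (other w e)) else g e

lemma flip_touch (w : Fin n) (b : Fin n → ZMod 2) (g : EdgeIdx n → Bool)
    (e : EdgeIdx n) (ht : touch w e) :
    flip w b g e = xor (g e) (tweak w b g (other w e)) := if_pos ht

lemma flip_not_touch (w : Fin n) (b : Fin n → ZMod 2) (g : EdgeIdx n → Bool)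
    (e : EdgeIdx n) (ht : ¬ touch w e) : flip w b g e = g e := if_neg ht

lemma restDeg_flip (w : Fin n) (b : Fin n → ZMod 2) (g : EdgeIdx n → Bool) (u : Fin n) :
    restDeg w (flip w b g) u = restDeg w g u := by
  unfold restDeg
  congr 1
  apply Finset.filter_congr
  intro e _
  by_cases ht : touch w e
  · simp [ht]
  · rw [flip_not_touch w b g e ht]

lemma tweak_flip (w : Fin n) (b : Fin n → ZMod 2) (g : EdgeIdx n → Bool) (u : Fin n) :
    tweak w b (flip w b g) u = tweak w b g u := by
  unfold tweak; rw [restDeg_flip]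

lemma flip_invol (w : Fin n) (b : Fin n → ZMod 2) :
    Function.Involutive (flip w b) := by
  intro g
  funext e
  by_cases ht : touch w e
  · rw [flip_touch w b _ e ht, flip_touch w b g e ht, tweak_flip]
    cases g e <;> cases tweak w b g (other w e) <;> rfl
  · rw [flip_not_touch w b _ e ht, flip_not_touch w b g e ht]

lemma key_iff (w : Fin n) (b : Fin n → ZMod 2) (g : EdgeIdx n → Bool)
    (u : Fin n) (h : u ≠ w) :
    ((gDegree n g u : ZMod 2) = b u) ↔ flip w b g (ew w u h) = false := by
  have hd := gDegree_eq w u h g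
  rw [flip_touch w b g _ (ew_touch w u h), other_ew w u h]
  unfold tweak
  rw [hd]
  push_cast
  have hiff : ∀ a c : ZMod 2, (a + 1 = c ↔ ¬ a = c) := by decide
  cases hg : g (ew w u h)
  · simp only [if_neg Bool.false_ne_true, Bool.false_xor, Nat.cast_zero, add_zero]
    cases hdec : decide ((restDeg w g u : ZMod 2) ≠ b u)
    · simp only [decide_eq_false_iff_not, ne_eq, not_not] at hdec
      simpa using hdec
    · simp only [decide_eq_true_eq, ne_eq] at hdec
      simpa using hdec
  · simp only [if_pos rfl, Bool.true_xor, Nat.cast_one]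
    cases hdec : decide ((restDeg w g u : ZMod 2) ≠ b u)
    · simp only [decide_eq_false_iff_not, ne_eq, not_not] at hdec
      simp only [Bool.not_false, Bool.true_eq_false, iff_false]
      intro hc
      exact (hiff (restDeg w g u : ZMod 2) (b u)).mp hc hdec
    · simp only [decide_eq_true_eq, ne_eq] at hdec
      simp only [Bool.not_true, iff_true]
      exact (hiff _ _).mpr hdec

lemma set_iff (w : Fin n) (b : Fin n → ZMod 2) (g : EdgeIdx n → Bool) :
    (∀ u : Fin n, u ≠ w → (gDegree n g u : ZMod 2) = b u) ↔
      (∀ e : EdgeIdx n, touch w e → flip w b g e = false) := by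
  constructor
  · intro hg e ht
    have hne := other_ne w e ht
    have := (key_iff w b g (other w e) hne).mp (hg _ hne)
    rwa [← eq_ew w (other w e) hne e
      (other_incident w e) ht] at this
  · intro hg u h
    exact (key_iff w b g u h).mpr (hg _ (ew_touch w u h))

end Stmt4

open Stmt4

/-- In `G(n, 1/2)` with `n ≥ 2`, the degree parities of the `n − 1`
vertices other than any fixed vertex `w` are i.i.d. uniform on `F₂`: for every
target vector `b`, the probability that `deg(u) ≡ b u (mod 2)` for all `u ≠ w`
is exactly `2^{-(n-1)}`. -/
theorem stmt_4 (n : ℕ) (hn : 2 ≤ n) (w : Fin n) (b : Fin n → ZMod 2) :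
    (PMF.uniformOfFintype (EdgeIdx n → Bool)).toOuterMeasure
        {g | ∀ u : Fin n, u ≠ w → (gDegree n g u : ZMod 2) = b u}
      = (1 / 2 : ℝ≥0∞) ^ (n - 1) := by
  classical
  have hne : Nonempty (EdgeIdx n) := by
    refine ⟨⟨(⟨0, by omega⟩, ⟨1, by omega⟩), ?_⟩⟩
    exact Fin.mk_lt_mk.mpr (by omega)
  rw [PMF.toOuterMeasure_uniformOfFintype_apply]
  set S : Set (EdgeIdx n → Bool) :=
    {g | ∀ u : Fin n, u ≠ w → (gDegree n g u : ZMod 2) = b u} with hS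
  have eST : S ≃ {g : EdgeIdx n → Bool | ∀ e : EdgeIdx n, touch w e → g e = false} :=
    Equiv.subtypeEquiv ((flip_invol w b).toPerm) fun g => set_iff w b g
  have eT : {g : EdgeIdx n → Bool | ∀ e : EdgeIdx n, touch w e → g e = false}
      ≃ ({e : EdgeIdx n // ¬ touch w e} → Bool) := by
    refine ⟨fun g e => g.1 e.1, fun h => ⟨fun e => if ht : touch w e then false
      else h ⟨e, ht⟩, fun e ht => dif_pos ht⟩, ?_, ?_⟩
    · rintro ⟨g, hg⟩
      ext e
      by_cases ht : touch w e
      · simp only [dif_pos ht]; exact (hg e ht).symm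
      · simp only [dif_neg ht]
    · intro h; funext e; simp [e.2]
  have eTouch : {e : EdgeIdx n // touch w e} ≃ {u : Fin n // u ≠ w} := by
    refine ⟨fun e => ⟨other w e.1, other_ne w e.1 e.2⟩,
      fun u => ⟨ew w u.1 u.2, ew_touch w u.1 u.2⟩, ?_, ?_⟩
    · rintro ⟨e, ht⟩
      simp only [Subtype.mk.injEq]
      exact (eq_ew w (other w e) (other_ne w e ht) e
        (other_incident w e) ht).symm
    · rintro ⟨u, hu⟩
      simp only [Subtype.mk.injEq]
      exact other_ew w u hu
  set m : ℕ := Fintype.card {e : EdgeIdx n // ¬ touch w e} with hm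
  have hk : Fintype.card {e : EdgeIdx n // touch w e} = n - 1 := by
    rw [Fintype.card_congr eTouch, Fintype.card_subtype_compl,
      Fintype.card_subtype_eq, Fintype.card_fin]
  have hcardE : Fintype.card (EdgeIdx n) = (n - 1) + m := by
    rw [← hk, ← Fintype.card_sum, Fintype.card_congr (Equiv.sumCompl (touch w)).symm]
  have h1 : Nat.card S = 2 ^ m := by
    rw [Nat.card_congr (eST.trans eT), Nat.card_eq_fintype_card,
      Fintype.card_fun, Fintype.card_bool]
  have h2 : Nat.card (EdgeIdx n → Bool) = 2 ^ ((n - 1) + m) := by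
    rw [Nat.card_eq_fintype_card, Fintype.card_fun, Fintype.card_bool, hcardE]
  rw [Fintype.card_eq_nat_card, Fintype.card_eq_nat_card, h1, h2]
  push_cast
  rw [pow_add]
  rw [ENNReal.div_eq_inv_mul, ENNReal.mul_inv (by left; positivity)
    (by left; exact ENNReal.pow_ne_top (by norm_num))]
  rw [mul_assoc, ENNReal.inv_mul_cancel (by positivity)
    (ENNReal.pow_ne_top (by norm_num)), mul_one, one_div, ENNReal.inv_pow]
end

section
/- Let G = (V, E) be a simple graph on n qubits, H_p = Σ_{(u,v)∈E} Z_u Z_v, and H_m = Σ_{u∈V} X_u. For disjoint subsets S, T ⊆ V, define X_S = Σ_{u∈S} X_u and X_T = Σ_{u∈T} X_u, and let E(S,T) be the set of edges with one endpoint in S and the other in T. Then Σ_{(u,v)∈E(S,T)} Z_u Z_v = (1/16) [X_S, [X_S, [X_T, [X_T, H_p]]]]. -/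
/-- The Pauli `X` operator acting on qubit `u` (tensored with identity elsewhere),
as a matrix on the computational basis `V → Bool`. -/
noncomputable def PX {V : Type*} [Fintype V] [DecidableEq V] (u : V) :
    Matrix (V → Bool) (V → Bool) ℂ :=
  fun s t => if s = Function.update t u (!(t u)) then 1 else 0

/-- The Pauli `Z` operator acting on qubit `u`. -/
noncomputable def PZ {V : Type*} [Fintype V] [DecidableEq V] (u : V) :
    Matrix (V → Bool) (V → Bool) ℂ :=
  Matrix.diagonal fun s => if s u then -1 else 1

/-- The operator `Z_u Z_v` associated with an unordered pair `{u, v}`. -/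
noncomputable def PZZ {V : Type*} [Fintype V] [DecidableEq V] (e : Sym2 V) :
    Matrix (V → Bool) (V → Bool) ℂ :=
  Sym2.lift ⟨fun a b => PZ a * PZ b, fun a b => by
    show PZ a * PZ b = PZ b * PZ a
    unfold PZ
    rw [Matrix.diagonal_mul_diagonal, Matrix.diagonal_mul_diagonal,
      show (fun i : V → Bool => (if i a = true then (-1 : ℂ) else 1) *
          if i b = true then -1 else 1) =
        (fun i : V → Bool => (if i b = true then (-1 : ℂ) else 1) *
          if i a = true then -1 else 1) from funext fun i => mul_comm _ _]⟩ e

section Aux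
variable {V : Type*} [Fintype V] [DecidableEq V]
set_option linter.unusedSectionVars false

def flipq (u : V) (s : V → Bool) : V → Bool := Function.update s u (!(s u))

lemma flipq_apply (u : V) (s : V → Bool) (w : V) :
    flipq u s w = if w = u then !(s u) else s w := by
  simp [flipq, Function.update_apply]

lemma flipq_flipq (u : V) (s : V → Bool) : flipq u (flipq u s) = s := by
  funext w
  simp only [flipq_apply]
  split_ifs with h <;> simp [h]

lemma flipq_comm (u v : V) (s : V → Bool) : flipq u (flipq v s) = flipq v (flipq u s) := by
  rcases eq_or_ne u v with rfl | huv
  · rfl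
  · funext w
    simp only [flipq_apply]
    split_ifs with h1 h2 h2 <;> simp_all
set_option linter.unusedSectionVars false

lemma PX_apply (u : V) (s t : V → Bool) : PX u s t = if s = flipq u t then 1 else 0 := rfl

lemma PX_mul_apply (u : V) (M : Matrix (V → Bool) (V → Bool) ℂ) (s t : V → Bool) :
    (PX u * M) s t = M (flipq u s) t := by
  rw [Matrix.mul_apply]
  have h : ∀ x : V → Bool, (s = flipq u x) = (x = flipq u s) := by
    intro x
    apply propext
    constructor <;> intro h <;> rw [h, flipq_flipq]
  simp only [PX_apply, h, ite_mul, one_mul, zero_mul, Finset.sum_ite_eq', Finset.mem_univ,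
    if_true]

lemma mul_PX_apply (u : V) (M : Matrix (V → Bool) (V → Bool) ℂ) (s t : V → Bool) :
    (M * PX u) s t = M s (flipq u t) := by
  rw [Matrix.mul_apply]
  simp only [PX_apply, mul_ite, mul_one, mul_zero, Finset.sum_ite_eq', Finset.mem_univ, if_true]

lemma PX_sq (u : V) : PX u * PX u = 1 := by
  ext s t
  rw [PX_mul_apply, PX_apply, Matrix.one_apply]
  refine if_congr ?_ rfl rfl
  constructor <;> intro h
  · have := congrArg (flipq u) h; rwa [flipq_flipq, flipq_flipq] at this
  · rw [h]

lemma PX_comm (u v : V) : PX u * PX v = PX v * PX u := by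
  ext s t
  rw [PX_mul_apply, PX_mul_apply, PX_apply, PX_apply]
  refine if_congr ?_ rfl rfl
  constructor <;> intro h
  · have := congrArg (flipq v) h
    rw [flipq_flipq, flipq_comm] at this
    have := congrArg (flipq u) this
    rwa [flipq_flipq] at this
  · have := congrArg (flipq u) h
    rw [flipq_flipq, flipq_comm] at this
    have := congrArg (flipq v) this
    rwa [flipq_flipq] at this

lemma PX_mul_diagonal (u : V) (f : (V → Bool) → ℂ) :
    PX u * Matrix.diagonal f = Matrix.diagonal (fun s => f (flipq u s)) * PX u := by
  ext s t
  rw [PX_mul_apply, mul_PX_apply, Matrix.diagonal_apply, Matrix.diagonal_apply]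
  have h : (flipq u s = t) ↔ (s = flipq u t) := by
    constructor <;> intro h
    · rw [← h, flipq_flipq]
    · rw [h, flipq_flipq]
  exact if_congr h rfl rfl

noncomputable def dZZ (a b : V) (s : V → Bool) : ℂ :=
  (if s a then -1 else 1) * (if s b then -1 else 1)

lemma PZZ_mk (a b : V) : PZZ s(a, b) = Matrix.diagonal (dZZ a b) := by
  show PZ a * PZ b = _
  unfold PZ dZZ
  rw [Matrix.diagonal_mul_diagonal]

lemma dZZ_flipq_of_ne (u a b : V) (hua : u ≠ a) (hub : u ≠ b) (s : V → Bool) :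
    dZZ a b (flipq u s) = dZZ a b s := by
  unfold dZZ
  rw [flipq_apply, flipq_apply]
  simp [Ne.symm hua, Ne.symm hub]

lemma dZZ_flipq_of_mem (u a b : V) (h : u = a ∨ u = b) (hab : a ≠ b) (s : V → Bool) :
    dZZ a b (flipq u s) = -(dZZ a b s) := by
  unfold dZZ
  rw [flipq_apply, flipq_apply]
  rcases h with rfl | rfl
  · simp only [if_pos rfl, if_neg (Ne.symm hab)]
    cases s u <;> simp <;> split_ifs <;> ring
  · simp only [if_pos rfl, if_neg hab]
    cases s u <;> simp <;> split_ifs <;> ring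

lemma PX_comm_PZZ (u a b : V) (hua : u ≠ a) (hub : u ≠ b) :
    PX u * Matrix.diagonal (dZZ a b) = Matrix.diagonal (dZZ a b) * PX u := by
  rw [PX_mul_diagonal,
    show (fun s => dZZ a b (flipq u s)) = dZZ a b from
      funext fun s => dZZ_flipq_of_ne u a b hua hub s]

lemma PX_anticomm_PZZ (u a b : V) (h : u = a ∨ u = b) (hab : a ≠ b) :
    PX u * Matrix.diagonal (dZZ a b) = -(Matrix.diagonal (dZZ a b) * PX u) := by
  rw [PX_mul_diagonal]
  rw [show (fun s => dZZ a b (flipq u s)) = fun s => -(dZZ a b s) from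
    funext fun s => dZZ_flipq_of_mem u a b h hab s]
  have : Matrix.diagonal (fun s => -(dZZ a b s)) = -(Matrix.diagonal (dZZ a b)) := by
    ext s t
    simp [Matrix.diagonal_apply]
    split_ifs <;> simp
  rw [this, neg_mul]

lemma quad_comm {R : Type*} [Ring R] [Algebra ℂ R] (C N P : R)
    (hC : C * P = P * C) (hN : N * P = -(P * N)) (hCN : C * N = N * C) :
    ⁅C + N, ⁅C + N, P⁆⁆ = (4 : ℂ) • (N * (N * P)) := by
  have h1 : ⁅C + N, P⁆ = N * P + N * P := by
    rw [Ring.lie_def, add_mul, mul_add, hC]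
    have hPN : P * N = -(N * P) := by rw [hN, neg_neg]
    rw [hPN]
    abel
  rw [h1, Ring.lie_def]
  have e1 : (N * P) * C = C * (N * P) := by
    rw [mul_assoc, ← hC, ← mul_assoc, ← hCN, mul_assoc]
  have e2 : (N * P) * N = -(N * (N * P)) := by
    rw [mul_assoc, show P * N = -(N * P) from by rw [hN, neg_neg], mul_neg, ← mul_assoc, mul_assoc]
  have h4 : (4 : ℂ) • (N * (N * P)) = N * (N * P) + N * (N * P) + (N * (N * P) + N * (N * P)) := by
    rw [show (4 : ℂ) = 1 + 1 + (1 + 1) by norm_num, add_smul, add_smul, one_smul]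
  simp only [mul_add, add_mul, e1, e2, h4, ← mul_assoc]
  abel_nf
  module

lemma PXsum_comm (F F' : Finset V) :
    (∑ u ∈ F, PX u) * (∑ u ∈ F', PX u) = (∑ u ∈ F', PX u) * (∑ u ∈ F, PX u) := by
  rw [Finset.sum_mul_sum, Finset.sum_mul_sum]
  rw [Finset.sum_comm]
  exact Finset.sum_congr rfl fun i _ => Finset.sum_congr rfl fun j _ => PX_comm j i

lemma Nsum_eq (F : Finset V) (a b : V) (hab : a ≠ b) :
    (∑ u ∈ F.filter (fun u => u = a ∨ u = b), PX u)
      = (if a ∈ F then PX a else 0) + (if b ∈ F then PX b else 0) := by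
  rw [Finset.sum_filter]
  have : ∀ u ∈ F, (if u = a ∨ u = b then PX u else 0)
      = (if u = a then PX u else 0) + (if u = b then PX u else 0) := by
    intro u _
    rcases eq_or_ne u a with rfl | hua
    · simp [hab]
    · rcases eq_or_ne u b with rfl | hub
      · simp [hua]
      · simp [hua, hub]
  rw [Finset.sum_congr rfl this, Finset.sum_add_distrib, Finset.sum_ite_eq' F a (fun u => PX u),
    Finset.sum_ite_eq' F b (fun u => PX u)]

lemma Nsum_anticomm (F : Finset V) (a b : V) (hab : a ≠ b)
    (hall : ∀ u ∈ F, u = a ∨ u = b) :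
    (∑ u ∈ F, PX u) * Matrix.diagonal (dZZ a b)
      = -(Matrix.diagonal (dZZ a b) * (∑ u ∈ F, PX u)) := by
  rw [Finset.sum_mul, Finset.mul_sum, ← Finset.sum_neg_distrib]
  exact Finset.sum_congr rfl fun u hu => PX_anticomm_PZZ u a b (hall u hu) hab

lemma Csum_comm (F : Finset V) (a b : V)
    (hall : ∀ u ∈ F, u ≠ a ∧ u ≠ b) :
    (∑ u ∈ F, PX u) * Matrix.diagonal (dZZ a b)
      = Matrix.diagonal (dZZ a b) * (∑ u ∈ F, PX u) := by
  rw [Finset.sum_mul, Finset.mul_sum]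
  exact Finset.sum_congr rfl fun u hu => PX_comm_PZZ u a b (hall u hu).1 (hall u hu).2

lemma conj2 {R : Type*} [Ring R] (X Q D : R) (h1 : X * Q = Q * X) (h2 : X * D = D * X) :
    X * (Q * (Q * D)) = (Q * (Q * D)) * X := by
  rw [← mul_assoc, h1, mul_assoc, ← mul_assoc X, h1, mul_assoc, h2,
    ← mul_assoc, ← mul_assoc, ← mul_assoc, mul_assoc Q Q D]

lemma aconj2 {R : Type*} [Ring R] (X Q D : R) (h1 : X * Q = Q * X) (h2 : X * D = -(D * X)) :
    X * (Q * (Q * D)) = -((Q * (Q * D)) * X) := by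
  rw [← mul_assoc, h1, mul_assoc, ← mul_assoc X, h1, mul_assoc, h2, mul_neg, mul_neg,
    ← mul_assoc, ← mul_assoc, ← mul_assoc, mul_assoc Q Q D]

lemma lie_smul4 (X Y : Matrix (V → Bool) (V → Bool) ℂ) (c : ℂ) :
    ⁅X, c • Y⁆ = c • ⁅X, Y⁆ := by
  rw [Ring.lie_def, Ring.lie_def, mul_smul_comm, smul_mul_assoc, smul_sub]

lemma edge_quad (S T : Finset V) (hST : Disjoint S T) (a b : V) (hab : a ≠ b) :
    ⁅∑ u ∈ S, PX u, ⁅∑ u ∈ S, PX u,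
      ⁅∑ u ∈ T, PX u, ⁅∑ u ∈ T, PX u, Matrix.diagonal (dZZ a b)⁆⁆⁆⁆
      = if (a ∈ S ∧ b ∈ T) ∨ (b ∈ S ∧ a ∈ T) then
          (16 : ℂ) • Matrix.diagonal (dZZ a b) else 0 := by
  classical
  set D := Matrix.diagonal (dZZ a b) with hD
  set NT := ∑ u ∈ T.filter (fun u => u = a ∨ u = b), PX u with hNTdef
  set CT := ∑ u ∈ T.filter (fun u => ¬(u = a ∨ u = b)), PX u with hCTdef
  set NS := ∑ u ∈ S.filter (fun u => u = a ∨ u = b), PX u with hNSdef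
  set CS := ∑ u ∈ S.filter (fun u => ¬(u = a ∨ u = b)), PX u with hCSdef
  have hAT : (∑ u ∈ T, PX u) = CT + NT := by
    rw [hCTdef, hNTdef, add_comm]
    exact (Finset.sum_filter_add_sum_filter_not T _ _).symm
  have hAS : (∑ u ∈ S, PX u) = CS + NS := by
    rw [hCSdef, hNSdef, add_comm]
    exact (Finset.sum_filter_add_sum_filter_not S _ _).symm
  have hCT_D : CT * D = D * CT :=
    Csum_comm _ a b (fun u hu => not_or.mp (Finset.mem_filter.mp hu).2)
  have hNT_D : NT * D = -(D * NT) :=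
    Nsum_anticomm _ a b hab (fun u hu => (Finset.mem_filter.mp hu).2)
  have hCS_D : CS * D = D * CS :=
    Csum_comm _ a b (fun u hu => not_or.mp (Finset.mem_filter.mp hu).2)
  have hNS_D : NS * D = -(D * NS) :=
    Nsum_anticomm _ a b hab (fun u hu => (Finset.mem_filter.mp hu).2)
  have hinner : ⁅∑ u ∈ T, PX u, ⁅∑ u ∈ T, PX u, D⁆⁆ = (4 : ℂ) • (NT * (NT * D)) := by
    rw [hAT]
    exact quad_comm CT NT D hCT_D hNT_D (PXsum_comm _ _)
  have houter : ⁅∑ u ∈ S, PX u, ⁅∑ u ∈ S, PX u, NT * (NT * D)⁆⁆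
      = (4 : ℂ) • (NS * (NS * (NT * (NT * D)))) := by
    rw [hAS]
    exact quad_comm CS NS (NT * (NT * D))
      (conj2 CS NT D (PXsum_comm _ _) hCS_D)
      (aconj2 NS NT D (PXsum_comm _ _) hNS_D)
      (PXsum_comm _ _)
  have hmain : ⁅∑ u ∈ S, PX u, ⁅∑ u ∈ S, PX u,
      ⁅∑ u ∈ T, PX u, ⁅∑ u ∈ T, PX u, D⁆⁆⁆⁆
      = (16 : ℂ) • (NS * (NS * (NT * (NT * D)))) := by
    rw [hinner, lie_smul4, lie_smul4, houter, smul_smul]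
    norm_num
  rw [hmain, hNTdef, hNSdef, Nsum_eq T a b hab, Nsum_eq S a b hab]
  by_cases haT : a ∈ T <;> by_cases hbT : b ∈ T
  · have haS : a ∉ S := fun h => (Finset.disjoint_left.mp hST h) haT
    have hbS : b ∉ S := fun h => (Finset.disjoint_left.mp hST h) hbT
    simp [haT, hbT, haS, hbS]
  · have haS : a ∉ S := fun h => (Finset.disjoint_left.mp hST h) haT
    by_cases hbS : b ∈ S
    · rw [if_pos (Or.inr ⟨hbS, haT⟩)]
      simp [haT, hbT, haS, hbS, ← mul_assoc, PX_sq]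
    · simp [haT, hbT, haS, hbS]
  · have hbS : b ∉ S := fun h => (Finset.disjoint_left.mp hST h) hbT
    by_cases haS : a ∈ S
    · rw [if_pos (Or.inl ⟨haS, hbT⟩)]
      simp [haT, hbT, haS, hbS, ← mul_assoc, PX_sq]
    · simp [haT, hbT, hbS, haS]
  · have : ¬((a ∈ S ∧ b ∈ T) ∨ (b ∈ S ∧ a ∈ T)) := by
      rintro (⟨-, h⟩ | ⟨-, h⟩) <;> [exact hbT h; exact haT h]
    simp [haT, hbT, this]

lemma lie_sum' {ι : Type*} (F : Finset ι) (X : Matrix (V → Bool) (V → Bool) ℂ)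
    (f : ι → Matrix (V → Bool) (V → Bool) ℂ) :
    ⁅X, ∑ i ∈ F, f i⁆ = ∑ i ∈ F, ⁅X, f i⁆ := by
  simp only [Ring.lie_def, Finset.mul_sum, Finset.sum_mul, ← Finset.sum_sub_distrib]

end Aux

/-- The unweighted problem Hamiltonian `H_p = Σ_{(u,v)∈E} Z_u Z_v`. -/
noncomputable def HpU {V : Type*} [Fintype V] [DecidableEq V] (G : SimpleGraph V)
    [DecidableRel G.Adj] : Matrix (V → Bool) (V → Bool) ℂ :=
  ∑ e ∈ G.edgeFinset, PZZ e

/-- edge splitting identity: for disjoint `S, T ⊆ V`,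
`Σ_{(u,v)∈E(S,T)} Z_u Z_v = (1/16) [X_S, [X_S, [X_T, [X_T, H_p]]]]`
where `X_S = Σ_{u∈S} X_u`. -/
theorem stmt_8 {V : Type*} [Fintype V] [DecidableEq V] (G : SimpleGraph V)
    [DecidableRel G.Adj] (S T : Finset V) (hST : Disjoint S T) :
    ∑ e ∈ G.edgeFinset.filter (fun e => ∃ a b : V, e = s(a, b) ∧ a ∈ S ∧ b ∈ T), PZZ e
      = (16 : ℂ)⁻¹ •
          ⁅∑ u ∈ S, PX u, ⁅∑ u ∈ S, PX u,
            ⁅∑ u ∈ T, PX u, ⁅∑ u ∈ T, PX u, HpU G⁆⁆⁆⁆ := by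
  have hsum : ⁅∑ u ∈ S, PX u, ⁅∑ u ∈ S, PX u,
      ⁅∑ u ∈ T, PX u, ⁅∑ u ∈ T, PX u, HpU G⁆⁆⁆⁆
      = ∑ e ∈ G.edgeFinset, ⁅∑ u ∈ S, PX u, ⁅∑ u ∈ S, PX u,
          ⁅∑ u ∈ T, PX u, ⁅∑ u ∈ T, PX u, PZZ e⁆⁆⁆⁆ := by
    unfold HpU
    simp only [lie_sum']
  have key : ∀ e ∈ G.edgeFinset, ⁅∑ u ∈ S, PX u, ⁅∑ u ∈ S, PX u,
      ⁅∑ u ∈ T, PX u, ⁅∑ u ∈ T, PX u, PZZ e⁆⁆⁆⁆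
      = if (∃ a b : V, e = s(a, b) ∧ a ∈ S ∧ b ∈ T) then (16 : ℂ) • PZZ e else 0 := by
    intro e he
    revert he
    refine Sym2.ind (fun a b => ?_) e
    intro he
    have hab : a ≠ b := ((SimpleGraph.mem_edgeSet G).mp (SimpleGraph.mem_edgeFinset.mp he)).ne
    have hcond : (∃ a' b' : V, s(a, b) = s(a', b') ∧ a' ∈ S ∧ b' ∈ T)
        ↔ ((a ∈ S ∧ b ∈ T) ∨ (b ∈ S ∧ a ∈ T)) := by
      constructor
      · rintro ⟨x, y, hxy, hxS, hyT⟩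
        rcases Sym2.eq_iff.mp hxy with ⟨rfl, rfl⟩ | ⟨rfl, rfl⟩
        · exact Or.inl ⟨hxS, hyT⟩
        · exact Or.inr ⟨hxS, hyT⟩
      · rintro (⟨h1, h2⟩ | ⟨h1, h2⟩)
        · exact ⟨a, b, rfl, h1, h2⟩
        · exact ⟨b, a, Sym2.eq_swap.symm, h1, h2⟩
    rw [PZZ_mk, edge_quad S T hST a b hab, ← PZZ_mk]
    exact if_congr hcond.symm rfl rfl
  rw [hsum, Finset.sum_congr rfl key, ← Finset.sum_filter, ← Finset.smul_sum, smul_smul,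
    show ((16 : ℂ)⁻¹ * 16) = 1 by norm_num, one_smul]
end

section
/- Let u be a vertex of an unweighted graph G with degree d, let H_u be the span of XZ even stars centered at u (Pauli strings X_u Π_i (Z_{v_i})^{x_i} with x of even Hamming weight), and let f(·) = (1/4)[H_p, [H_p, ·]] with H_p = Σ_{(a,b)∈E} Z_a Z_b. Then f restricted to H_u is diagonalizable with spectrum exactly {(d − 2k)^2 : 0 ≤ k ≤ d−1}. In particular, all eigenvalues of f|_{H_u} are squares of integers congruent to d mod 2, so if u has even degree all eigenvalues are even, and if u has odd degree all eigenvalues are odd. -/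
/-- The XZ star `S^u_x = X_u · Π_i (Z_{nbr i})^{x_i}`. -/
noncomputable def evenStar {V : Type*} [Fintype V] [DecidableEq V] (u : V) {d : ℕ}
    (nbr : Fin d → V) (x : Fin d → Bool) : Matrix (V → Bool) (V → Bool) ℂ :=
  PX u * Matrix.diagonal fun s =>
    ∏ i : Fin d, if x i then (if s (nbr i) then (-1 : ℂ) else 1) else 1

/-- The span `H_u` of the XZ even stars centered at `u`. -/
noncomputable def starSpan {V : Type*} [Fintype V] [DecidableEq V] (u : V) {d : ℕ}
    (nbr : Fin d → V) : Submodule ℂ (Matrix (V → Bool) (V → Bool) ℂ) :=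
  Submodule.span ℂ
    {M | ∃ x : Fin d → Bool,
      Even ((Finset.univ.filter fun i => x i = true).card) ∧ M = evenStar u nbr x}

/-!
Operators of the form `X_u · D_g`, with `D_g` diagonal in the computational basis, are
stable under commutation with the diagonal `H_p`: `[H_p, X_u D_g] = X_u D_{g'}` where
`g'(t) = (E(t with bit u flipped) - E(t)) g(t) = -2 z_u(t) (Σ_i z_{v_i}(t)) g(t)`.
So `f` multiplies `g` by `(Σ_i z_{v_i})²`, a function of the neighbour bits `b` only.
The even stars are the characters `b ↦ (-1)^{x·b}` with `x` even; their Fourier transform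
over the even-weight group is (a multiple of) the indicator of a pair `{c, ¬c}`, on which
`(Σ_i z_{v_i})² = (d - 2|c|)²` is constant. Normalising `c_{i0} = 0` gives one such
eigenvector per even `x`, and orthogonality of characters inverts the transform.
-/

open Finset
open scoped symmDiff

namespace XZStar

section Characters

variable {ι : Type*} [Fintype ι]

def spin (b : Bool) : ℂ := if b then -1 else 1

@[simp] lemma spin_false : spin false = 1 := rfl
@[simp] lemma spin_true : spin true = -1 := rfl

lemma spin_xor (a b : Bool) : spin (xor a b) = spin a * spin b := by
  cases a <;> cases b <;> simp

lemma spin_not (b : Bool) : spin (!b) = -spin b := by cases b <;> simp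

def weight (x : ι → Bool) : ℕ := (univ.filter fun i => x i = true).card

/-- `(-1) ^ (x · a)`: as `x` varies these are the characters of the group `(ι → Bool, ∆)`. -/
def signDot (x a : ι → Bool) : ℂ := ∏ i, spin (x i && a i)

lemma signDot_comm (x a : ι → Bool) : signDot x a = signDot a x := by
  simp only [signDot, Bool.and_comm]

lemma signDot_mul_signDot (x a b : ι → Bool) :
    signDot x a * signDot x b = signDot x (a ∆ b) := by
  simp only [signDot, ← prod_mul_distrib, ← spin_xor, Pi.symmDiff_apply, Bool.symmDiff_eq_xor,
    Bool.and_xor_distrib_left]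

lemma signDot_top (x : ι → Bool) : signDot x ⊤ = (-1) ^ weight x := by
  simp [signDot, spin, prod_ite, weight]

lemma symmDiff_eq_bot_or_eq_top_iff {α : Type*} [BooleanAlgebra α] (a b : α) :
    a ∆ b = ⊥ ∨ a ∆ b = ⊤ ↔ b = a ∨ b = aᶜ := by
  rw [symmDiff_eq_bot, symmDiff_eq_top, eq_comm (a := a), eq_compl_iff_isCompl, isCompl_comm]

lemma sum_signDot [DecidableEq ι] (a : ι → Bool) :
    ∑ x, signDot x a = if a = ⊥ then 2 ^ Fintype.card ι else 0 := by
  simp only [signDot]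
  rw [← Fintype.prod_sum (fun i b => spin (b && a i))]
  split_ifs with ha
  · simp [ha, one_add_one_eq_two]
  · obtain ⟨i, hi⟩ : ∃ i, a i = true := by
      by_contra! h; exact ha (funext fun i => by simpa using h i)
    exact prod_eq_zero (mem_univ i) (by simp [hi])

lemma two_mul_sum_even_signDot [DecidableEq ι] (a : ι → Bool) :
    2 * ∑ x : {x : ι → Bool // Even (weight x)}, signDot x.1 a =
      (if a = ⊥ then 2 ^ Fintype.card ι else 0) + (if a = ⊤ then 2 ^ Fintype.card ι else 0) := by
  have h_top : a = ⊤ ↔ ⊤ ∆ a = ⊥ := by rw [top_symmDiff, hnot_eq_compl, compl_eq_bot]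
  simp only [h_top]
  rw [← sum_signDot, ← sum_signDot, ← sum_add_distrib, mul_sum,
    ← sum_subtype (univ.filter fun x => Even (weight x)) (by simp) (fun x => 2 * signDot x a),
    sum_filter]
  refine sum_congr rfl fun x _ => ?_
  rw [← signDot_mul_signDot, signDot_top]
  rcases Nat.even_or_odd (weight x) with h | h
  · simp [h, h.neg_one_pow]; ring
  · simp [Nat.not_even_iff_odd.2 h, h.neg_one_pow]

lemma sum_even_signDot [DecidableEq ι] [Nonempty ι] (a : ι → Bool) :
    ∑ x : {x : ι → Bool // Even (weight x)}, signDot x.1 a =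
      if a = ⊥ ∨ a = ⊤ then 2 ^ (Fintype.card ι - 1) else 0 := by
  have hpow : (2 : ℂ) ^ Fintype.card ι = 2 * 2 ^ (Fintype.card ι - 1) := by
    rw [← pow_succ', Nat.sub_add_cancel Fintype.card_pos]
  refine mul_left_cancel₀ (two_ne_zero (α := ℂ)) ?_
  rw [two_mul_sum_even_signDot, hpow]
  by_cases hbot : a = ⊥
  · simp [hbot]
  · by_cases htop : a = ⊤ <;> simp [hbot, htop]

lemma sum_spin (a : ι → Bool) : ∑ i, spin (a i) = Fintype.card ι - 2 * weight a := by
  calc ∑ i, spin (a i) = ∑ i, (1 - 2 * ((if a i = true then 1 else 0 : ℕ) : ℂ)) :=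
        sum_congr rfl fun i _ => by cases a i <;> norm_num [spin]
    _ = Fintype.card ι - 2 * weight a := by
        simp only [sum_sub_distrib, ← mul_sum, ← Nat.cast_sum, ← card_filter, weight]
        simp

lemma sq_sum_spin_of_eq_or_eq_compl {a c : ι → Bool} (h : a = c ∨ a = cᶜ) :
    (∑ i, spin (a i)) ^ 2 = ((Fintype.card ι : ℂ) - 2 * weight c) ^ 2 := by
  rcases h with rfl | rfl
  · rw [sum_spin]
  · simp only [Pi.compl_apply, Bool.compl_eq_bnot, spin_not, sum_neg_distrib, neg_sq, sum_spin]

end Characters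

section Representatives

variable {ι : Type*} [Fintype ι] [DecidableEq ι]

lemma weight_eq_weight_update_false_add (x : ι → Bool) (i : ι) :
    weight x = weight (Function.update x i false) + (x i).toNat := by
  simp only [weight, card_filter]
  rw [← add_sum_erase _ _ (mem_univ i), ← add_sum_erase _ _ (mem_univ i), Function.update_self]
  have h_rest : ∑ j ∈ univ.erase i, (if Function.update x i false j = true then 1 else 0) =
      ∑ j ∈ univ.erase i, (if x j = true then 1 else 0) :=
    sum_congr rfl fun j hj => by rw [Function.update_of_ne (ne_of_mem_erase hj)]
  rw [h_rest]
  cases x i <;> simp [add_comm]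

lemma eq_of_update_false_eq {x y : ι → Bool} (hx : Even (weight x)) (hy : Even (weight y))
    {i : ι} (h : Function.update x i false = Function.update y i false) : x = y := by
  have hxi : x i = y i := by
    rw [weight_eq_weight_update_false_add x i] at hx
    rw [weight_eq_weight_update_false_add y i, ← h] at hy
    revert hx hy
    cases x i <;> cases y i <;> simp [Nat.even_add]
  funext j
  by_cases hj : j = i
  · exact hj ▸ hxi
  · simpa [Function.update_of_ne hj] using congrFun h j

lemma signDot_update_false_comm (x z : ι → Bool) (i : ι) :
    signDot (Function.update x i false) z = signDot x (Function.update z i false) := by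
  refine prod_congr rfl fun j _ => ?_
  by_cases hj : j = i
  · simp [hj]
  · simp [Function.update_of_ne hj]

lemma sum_even_signDot_update_mul {z z' : ι → Bool} (hz : Even (weight z))
    (hz' : Even (weight z')) (i : ι) :
    ∑ x : {x : ι → Bool // Even (weight x)},
        signDot (Function.update x.1 i false) z * signDot (Function.update x.1 i false) z' =
      if z = z' then 2 ^ (Fintype.card ι - 1) else 0 := by
  have : Nonempty ι := ⟨i⟩
  simp only [signDot_update_false_comm _ _ i, signDot_mul_signDot]
  have h_cases : Function.update z i false ∆ Function.update z' i false = ⊥ ∨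
      Function.update z i false ∆ Function.update z' i false = ⊤ ↔ z = z' := by
    refine ⟨fun h => ?_, fun h => Or.inl (h ▸ symmDiff_self _)⟩
    rcases h with h | h
    · exact eq_of_update_false_eq hz hz' (symmDiff_eq_bot.1 h)
    · simpa using congrFun h i
  simp only [sum_even_signDot, h_cases]

lemma weight_update_false_le (x : ι → Bool) (i : ι) :
    weight (Function.update x i false) ≤ Fintype.card ι - 1 := by
  rw [← card_univ, ← card_erase_of_mem (mem_univ i)]
  refine card_le_card fun j hj => mem_erase.2 ⟨fun hji => ?_, mem_univ j⟩
  simp [hji] at hj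

lemma exists_even_weight_update_false_eq {k : ℕ} (hk : k ≤ Fintype.card ι - 1) (i : ι) :
    ∃ x : ι → Bool, Even (weight x) ∧ weight (Function.update x i false) = k := by
  obtain ⟨S, hSi, rfl⟩ := exists_subset_card_eq
    (s := univ.erase i) (n := k) (by rwa [card_erase_of_mem (mem_univ i), card_univ])
  have hiS : i ∉ S := fun h => (mem_erase.1 (hSi h)).1 rfl
  set x : ι → Bool := Function.update (fun j => decide (j ∈ S)) i (decide (Odd S.card))
  have hx : Function.update x i false = fun j => decide (j ∈ S) := by
    rw [Function.update_idem, Function.update_eq_self_iff, decide_eq_false hiS]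
  have h_weight : weight (Function.update x i false) = S.card := by
    rw [hx]; simp [weight]
  refine ⟨x, ?_, h_weight⟩
  rw [weight_eq_weight_update_false_add x i, h_weight]
  simp only [x, Function.update_self]
  rcases Nat.even_or_odd S.card with h | h
  · simpa [Nat.not_odd_iff_even.2 h] using h
  · simp [h, h.add_one]

end Representatives

section Operators

variable {V : Type*} [Fintype V] [DecidableEq V]

def flipAt (u : V) (t : V → Bool) : V → Bool := Function.update t u (!t u)

noncomputable def xDiag (u : V) : ((V → Bool) → ℂ) →ₗ[ℂ] Matrix (V → Bool) (V → Bool) ℂ :=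
  LinearMap.mulLeft ℂ (PX u) ∘ₗ Matrix.diagonalLinearMap (V → Bool) ℂ ℂ

lemma xDiag_eq_mul (u : V) (g : (V → Bool) → ℂ) : xDiag u g = PX u * Matrix.diagonal g := rfl

lemma xDiag_apply (u : V) (g : (V → Bool) → ℂ) (s t : V → Bool) :
    xDiag u g s t = if s = flipAt u t then g t else 0 := by
  rw [xDiag_eq_mul, Matrix.mul_diagonal, PX, ite_mul, one_mul, zero_mul]
  rfl

lemma xDiag_ne_zero {u : V} {g : (V → Bool) → ℂ} {t : V → Bool} (ht : g t ≠ 0) :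
    xDiag u g ≠ 0 := fun h => ht <| by
  simpa [xDiag_apply] using congrFun (congrFun h (flipAt u t)) t

lemma lie_diagonal_xDiag (u : V) (h g : (V → Bool) → ℂ) :
    ⁅Matrix.diagonal h, xDiag u g⁆ = xDiag u (fun t => (h (flipAt u t) - h t) * g t) := by
  ext s t
  rw [Ring.lie_def, Matrix.sub_apply, Matrix.diagonal_mul, Matrix.mul_diagonal, xDiag_apply,
    xDiag_apply]
  split_ifs with hst
  · rw [hst]; ring
  · ring

lemma evenStar_eq_xDiag (u : V) {d : ℕ} (nbr : Fin d → V) (x : Fin d → Bool) :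
    evenStar u nbr x = xDiag u (fun s => signDot x (s ∘ nbr)) := by
  refine congrArg (PX u * ·) (congrArg Matrix.diagonal (funext fun s => ?_))
  refine prod_congr rfl fun i _ => ?_
  rw [Function.comp_apply]
  cases x i <;> cases s (nbr i) <;> rfl

noncomputable def edgeSpin (e : Sym2 V) (s : V → Bool) : ℂ :=
  Sym2.lift ⟨fun a b => spin (s a) * spin (s b), fun _ _ => mul_comm _ _⟩ e

lemma PZZ_eq_diagonal (e : Sym2 V) : PZZ e = Matrix.diagonal (edgeSpin e) := by
  induction e using Sym2.ind with
  | _ a b =>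
    simp only [PZZ, PZ, Sym2.lift_mk, Matrix.diagonal_mul_diagonal]
    rfl

noncomputable def energy (G : SimpleGraph V) [DecidableRel G.Adj] : (V → Bool) → ℂ :=
  ∑ e ∈ G.edgeFinset, edgeSpin e

lemma HpU_eq_diagonal (G : SimpleGraph V) [DecidableRel G.Adj] :
    HpU G = Matrix.diagonal (energy G) := by
  simp only [HpU, PZZ_eq_diagonal]
  exact (map_sum (Matrix.diagonalAddMonoidHom (V → Bool) ℂ) _ _).symm

lemma incidenceFinset_eq_image (G : SimpleGraph V) [DecidableRel G.Adj] (u : V) :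
    G.incidenceFinset u = (G.neighborFinset u).image (s(u, ·)) := by
  ext e
  induction e using Sym2.ind with
  | _ a b =>
    simp only [SimpleGraph.mem_incidenceFinset, SimpleGraph.incidenceSet, Set.mem_ofPred_eq,
      mem_image, SimpleGraph.mem_neighborFinset, SimpleGraph.mem_edgeSet, Sym2.mem_iff]
    constructor
    · rintro ⟨hab, rfl | rfl⟩
      · exact ⟨b, hab, rfl⟩
      · exact ⟨a, hab.symm, Sym2.eq_swap⟩
    · rintro ⟨w, huw, hw⟩
      rcases Sym2.eq_iff.1 hw with ⟨rfl, rfl⟩ | ⟨rfl, rfl⟩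
      exacts [⟨huw, Or.inl rfl⟩, ⟨huw.symm, Or.inr rfl⟩]

lemma energy_flipAt_sub (G : SimpleGraph V) [DecidableRel G.Adj] (u : V) (t : V → Bool) :
    energy G (flipAt u t) - energy G t =
      -2 * spin (t u) * ∑ w ∈ G.neighborFinset u, spin (t w) := by
  have h_off : ∀ e ∈ G.edgeFinset.filter (u ∉ ·),
      edgeSpin e (flipAt u t) - edgeSpin e t = 0 := by
    intro e he
    induction e using Sym2.ind with
    | _ a b =>
      obtain ⟨hua, hub⟩ : u ≠ a ∧ u ≠ b := by
        simpa [Sym2.mem_iff, not_or] using (mem_filter.1 he).2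
      simp [edgeSpin, flipAt, Function.update_of_ne hua.symm, Function.update_of_ne hub.symm]
  have h_on : ∀ w ∈ G.neighborFinset u,
      edgeSpin s(u, w) (flipAt u t) - edgeSpin s(u, w) t = -2 * spin (t u) * spin (t w) := by
    intro w hw
    have hwu : w ≠ u := ((G.mem_neighborFinset u w).1 hw).ne.symm
    simp only [edgeSpin, Sym2.lift_mk, flipAt, Function.update_self, Function.update_of_ne hwu]
    cases t u <;> simp <;> ring
  rw [energy, Finset.sum_apply, Finset.sum_apply, ← sum_sub_distrib,
    ← sum_filter_add_sum_filter_not _ (u ∈ ·),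
    ← SimpleGraph.incidenceFinset_eq_filter, incidenceFinset_eq_image,
    sum_image fun _ _ _ _ h => Sym2.congr_right.1 h, sum_eq_zero h_off, add_zero, mul_sum]
  exact sum_congr rfl h_on

lemma lie_HpU_lie_HpU_xDiag (G : SimpleGraph V) [DecidableRel G.Adj] (u : V)
    (g : (V → Bool) → ℂ) :
    (4 : ℂ)⁻¹ • ⁅HpU G, ⁅HpU G, xDiag u g⁆⁆ =
      xDiag u (fun t => (∑ w ∈ G.neighborFinset u, spin (t w)) ^ 2 * g t) := by
  rw [HpU_eq_diagonal, lie_diagonal_xDiag, lie_diagonal_xDiag, ← map_smul]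
  congr 1
  funext t
  simp only [Pi.smul_apply, smul_eq_mul, energy_flipAt_sub]
  cases t u <;> simp <;> ring

omit [DecidableEq V] in
lemma sum_neighborFinset_eq_sum {G : SimpleGraph V} [DecidableRel G.Adj] {u : V} {d : ℕ}
    {nbr : Fin d → V} (hinj : Function.Injective nbr) (hnbr : ∀ w : V, G.Adj u w ↔ ∃ i, nbr i = w)
    (f : V → ℂ) : ∑ w ∈ G.neighborFinset u, f w = ∑ i, f (nbr i) := by
  have h : G.neighborFinset u = univ.map ⟨nbr, hinj⟩ := by ext w; simp [hnbr]
  rw [h, sum_map]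
  rfl

end Operators

section Eigenvectors

variable {V : Type*} [Fintype V] [DecidableEq V] {d : ℕ} (u : V) (nbr : Fin d → V) (i0 : Fin d)

/-- Fourier transform of the even stars over the even-weight group; `update x i0 false`
represents `x` modulo the all-ones vector. -/
noncomputable def starEigvec (x : Fin d → Bool) : Matrix (V → Bool) (V → Bool) ℂ :=
  ∑ z : {z : Fin d → Bool // Even (weight z)},
    signDot (Function.update x i0 false) z.1 • evenStar u nbr z.1

lemma starEigvec_mem_starSpan (x : Fin d → Bool) : starEigvec u nbr i0 x ∈ starSpan u nbr :=
  Submodule.sum_mem _ fun z _ => Submodule.smul_mem _ _ (Submodule.subset_span ⟨z.1, z.2, rfl⟩)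

lemma starEigvec_eq_xDiag (x : Fin d → Bool) :
    starEigvec u nbr i0 x = xDiag u (fun t =>
      if t ∘ nbr = Function.update x i0 false ∨ t ∘ nbr = (Function.update x i0 false)ᶜ
      then 2 ^ (d - 1) else 0) := by
  have : Nonempty (Fin d) := ⟨i0⟩
  simp only [starEigvec, evenStar_eq_xDiag, ← map_smul, ← map_sum]
  congr 1
  funext t
  simp only [Finset.sum_apply, Pi.smul_apply, smul_eq_mul]
  rw [sum_congr rfl fun z _ => by rw [signDot_comm _ z.1, signDot_mul_signDot],
    sum_even_signDot, Fintype.card_fin]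
  simp only [symmDiff_eq_bot_or_eq_top_iff]

lemma starEigvec_ne_zero (hinj : Function.Injective nbr) (x : Fin d → Bool) :
    starEigvec u nbr i0 x ≠ 0 := by
  rw [starEigvec_eq_xDiag]
  refine xDiag_ne_zero (t := Function.extend nbr (Function.update x i0 false) fun _ => false) ?_
  have h : Function.extend nbr (Function.update x i0 false) (fun _ => false) ∘ nbr =
      Function.update x i0 false := funext (hinj.extend_apply _ _)
  simp [h]

lemma lie_HpU_lie_HpU_starEigvec (G : SimpleGraph V) [DecidableRel G.Adj]
    (hinj : Function.Injective nbr) (hnbr : ∀ w : V, G.Adj u w ↔ ∃ i, nbr i = w)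
    (x : Fin d → Bool) :
    (4 : ℂ)⁻¹ • ⁅HpU G, ⁅HpU G, starEigvec u nbr i0 x⁆⁆ =
      ((d : ℂ) - 2 * weight (Function.update x i0 false)) ^ 2 • starEigvec u nbr i0 x := by
  rw [starEigvec_eq_xDiag, lie_HpU_lie_HpU_xDiag, ← map_smul]
  congr 1
  funext t
  rw [sum_neighborFinset_eq_sum hinj hnbr, Pi.smul_apply, smul_eq_mul]
  split_ifs with h
  · have h_sq := sq_sum_spin_of_eq_or_eq_compl h
    simp only [Fintype.card_fin, Function.comp_apply] at h_sq
    rw [h_sq]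
  · simp

lemma evenStar_mem_span_starEigvec {z : Fin d → Bool} (hz : Even (weight z)) :
    evenStar u nbr z ∈ Submodule.span ℂ
      (Set.range fun x : {x : Fin d → Bool // Even (weight x)} => starEigvec u nbr i0 x.1) := by
  have h_inv : ∑ x : {x : Fin d → Bool // Even (weight x)},
      signDot (Function.update x.1 i0 false) z • starEigvec u nbr i0 x.1 =
        (2 : ℂ) ^ (d - 1) • evenStar u nbr z := by
    simp only [starEigvec, smul_sum, smul_smul]
    rw [sum_comm, Fintype.sum_eq_single ⟨z, hz⟩ fun z' hz' => ?_]
    · rw [← sum_smul, sum_even_signDot_update_mul hz hz, if_pos rfl, Fintype.card_fin]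
    · rw [← sum_smul, sum_even_signDot_update_mul hz z'.2,
        if_neg fun h => hz' (Subtype.ext h.symm), zero_smul]
  have h : evenStar u nbr z = ((2 : ℂ) ^ (d - 1))⁻¹ • ∑ x : {x : Fin d → Bool // Even (weight x)},
      signDot (Function.update x.1 i0 false) z • starEigvec u nbr i0 x.1 := by
    rw [h_inv, smul_smul, inv_mul_cancel₀ (pow_ne_zero _ two_ne_zero), one_smul]
  rw [h]
  exact Submodule.smul_mem _ _ (Submodule.sum_mem _ fun x _ =>
    Submodule.smul_mem _ _ (Submodule.subset_span ⟨x, rfl⟩))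

lemma span_range_starEigvec :
    Submodule.span ℂ (Set.range fun x : {x : Fin d → Bool // Even (weight x)} =>
      starEigvec u nbr i0 x.1) = starSpan u nbr := by
  refine le_antisymm (Submodule.span_le.2 ?_) (Submodule.span_le.2 ?_)
  · rintro _ ⟨x, rfl⟩
    exact starEigvec_mem_starSpan u nbr i0 x.1
  · rintro _ ⟨z, hz, rfl⟩
    exact evenStar_mem_span_starEigvec u nbr i0 hz

end Eigenvectors

lemma range_sq_sub_two_mul_weight_update_false {d : ℕ} (i0 : Fin d) :
    Set.range (fun x : {x : Fin d → Bool // Even (weight x)} =>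
        ((d : ℂ) - 2 * weight (Function.update x.1 i0 false)) ^ 2) =
      {c : ℂ | ∃ k : ℕ, k ≤ d - 1 ∧ c = ((d : ℂ) - 2 * k) ^ 2} := by
  ext c
  constructor
  · rintro ⟨x, rfl⟩
    exact ⟨_, by simpa using weight_update_false_le x.1 i0, rfl⟩
  · rintro ⟨k, hk, rfl⟩
    obtain ⟨x, hx, hxk⟩ := exists_even_weight_update_false_eq (k := k) (by simpa using hk) i0
    exact ⟨⟨x, hx⟩, by dsimp only; rw [hxk]⟩

end XZStar

open XZStar in
/-- for `u` of degree `d ≥ 1` in an unweighted graph, the map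
`f(M) = (1/4)[H_p, [H_p, M]]` restricted to `H_u` is diagonalizable with spectrum
exactly `{(d − 2k)² : 0 ≤ k ≤ d−1}`; in particular every eigenvalue is the square
of an integer congruent to `d` mod 2. -/
theorem stmt_10 {V : Type*} [Fintype V] [DecidableEq V] (G : SimpleGraph V)
    [DecidableRel G.Adj] (u : V) (d : ℕ) (hd : 1 ≤ d) (nbr : Fin d → V)
    (hinj : Function.Injective nbr)
    (hnbr : ∀ w : V, G.Adj u w ↔ ∃ i, nbr i = w) :
    ∃ (w : {x : Fin d → Bool //
            Even ((Finset.univ.filter fun i => x i = true).card)} →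
          Matrix (V → Bool) (V → Bool) ℂ)
      (lam : {x : Fin d → Bool //
            Even ((Finset.univ.filter fun i => x i = true).card)} → ℂ),
      (∀ e, w e ∈ starSpan u nbr) ∧
      (∀ e, w e ≠ 0) ∧
      (∀ e, (4 : ℂ)⁻¹ • ⁅HpU G, ⁅HpU G, w e⁆⁆ = lam e • w e) ∧
      Submodule.span ℂ (Set.range w) = starSpan u nbr ∧
      Set.range lam = {c : ℂ | ∃ k : ℕ, k ≤ d - 1 ∧ c = ((d : ℂ) - 2 * k) ^ 2} ∧
      (∀ e, ∃ m : ℤ, m % 2 = (d : ℤ) % 2 ∧ lam e = (m : ℂ) ^ 2) := by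
  let i0 : Fin d := ⟨0, hd⟩
  refine ⟨fun x => starEigvec u nbr i0 x.1,
    fun x => ((d : ℂ) - 2 * weight (Function.update x.1 i0 false)) ^ 2,
    fun x => starEigvec_mem_starSpan u nbr i0 x.1,
    fun x => starEigvec_ne_zero u nbr i0 hinj x.1,
    fun x => lie_HpU_lie_HpU_starEigvec u nbr i0 G hinj hnbr x.1,
    span_range_starEigvec u nbr i0, range_sq_sub_two_mul_weight_update_false i0,
    fun x => ⟨d - 2 * weight (Function.update x.1 i0 false), by omega, by push_cast; rfl⟩⟩
end

section
/- Let G = (V, E) be a simple graph, index its edges e_1, ..., e_m, and let G' = (V', E') be the graph obtained from G by replacing each edge e_i = (u_i, v_i) with a path through 2i new internal vertices. Then MaxCut(G') = MaxCut(G) + (|V'| − |V|), that is, MaxCut(G') = MaxCut(G) + Σ_{i=1}^m 2i = MaxCut(G) + m(m+1). Moreover, restricting an optimal cut of G' to V gives an optimal cut of G, and any optimal cut of G extends to an optimal cut of G' by alternating colors along each subdivision path. -/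
/-!
The edges of `G'` are partitioned by the subdivision paths, and the path replacing `e_i` has odd
length `2i + 1`. Along it a 2-coloring changes color an even number of times if the endpoints
agree and an odd number of times otherwise, so the path contributes at most `2i` cut edges plus
one if `e_i` is cut by the restricted coloring. Alternating colors along every path attains this
bound, which gives both the value of `MaxCut(G')` and the transfer of optimal cuts.
-/

/-- Vertex set of the subdivided graph: the original vertices plus, for the `i`-th
edge (`i : Fin m`, representing edge `e_{i+1}`), a set of `2(i+1)` internal path
vertices. -/
abbrev SubdivVert (V : Type*) (m : ℕ) :=
  V ⊕ (Σ i : Fin m, Fin (2 * ((i : ℕ) + 1)))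

/-- One direction of the adjacency relation of the subdivided graph, where `ep i`
gives the two endpoints of the `i`-th edge of the original graph: the endpoint
`(ep i).1` is joined to the first internal vertex of the `i`-th path, consecutive
internal vertices are joined, and the last internal vertex is joined to
`(ep i).2`. -/
def subdivRel {V : Type*} (m : ℕ) (ep : Fin m → V × V) :
    SubdivVert V m → SubdivVert V m → Prop
  | Sum.inl a, Sum.inr ⟨i, j⟩ =>
      (a = (ep i).1 ∧ (j : ℕ) = 0) ∨ (a = (ep i).2 ∧ (j : ℕ) = 2 * ((i : ℕ) + 1) - 1)
  | Sum.inr ⟨i, j⟩, Sum.inr ⟨i', j'⟩ => (i : ℕ) = (i' : ℕ) ∧ (j : ℕ) + 1 = (j' : ℕ)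
  | _, _ => False

/-- The graph obtained from a graph with edges `e_1, …, e_m` (endpoints given by
`ep`) by replacing the `i`-th edge by a path through `2i` new internal vertices. -/
def subdivGraph {V : Type*} (m : ℕ) (ep : Fin m → V × V) :
    SimpleGraph (SubdivVert V m) :=
  SimpleGraph.fromRel (subdivRel m ep)

open Classical in
/-- The number of edges of `H` cut by the 2-coloring `c`. -/
noncomputable def cutSize {W : Type*} [Fintype W] (H : SimpleGraph W) (c : W → Bool) : ℕ :=
  (Finset.univ.filter fun e : Sym2 W =>
    e ∈ H.edgeSet ∧ ∃ a b : W, e = s(a, b) ∧ c a ≠ c b).card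

open Classical in
/-- The MaxCut value of `H`: the maximum of `cutSize` over all 2-colorings. -/
noncomputable def maxCut {W : Type*} [Fintype W] (H : SimpleGraph W) : ℕ :=
  Finset.univ.sup fun c : W → Bool => cutSize H c

open Finset

section MaxCut

variable {W : Type*} [Fintype W]

lemma cutSize_le_maxCut (H : SimpleGraph W) (c : W → Bool) : cutSize H c ≤ maxCut H := by
  classical
  exact le_sup (f := fun c => cutSize H c) (mem_univ c)

lemma exists_cutSize_eq_maxCut (H : SimpleGraph W) : ∃ c, cutSize H c = maxCut H := by
  classical
  obtain ⟨c, -, hc⟩ := exists_mem_eq_sup univ univ_nonempty fun c => cutSize H c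
  exact ⟨c, hc.symm⟩

lemma maxCut_eq_add_of_le_of_eq {W' : Type*} [Fintype W'] (H : SimpleGraph W) (H' : SimpleGraph W')
    (r : (W' → Bool) → W → Bool) (e : (W → Bool) → W' → Bool) (K : ℕ)
    (hr : ∀ c', cutSize H' c' ≤ cutSize H (r c') + K)
    (he : ∀ c, cutSize H' (e c) = cutSize H c + K) :
    maxCut H' = maxCut H + K := by
  classical
  refine le_antisymm (Finset.sup_le fun c' _ => (hr c').trans ?_) ?_
  · exact Nat.add_le_add_right (cutSize_le_maxCut H _) K
  · obtain ⟨c, hc⟩ := exists_cutSize_eq_maxCut H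
    rw [← hc, ← he]
    exact cutSize_le_maxCut H' _

lemma exists_mk_eq_and_ne_iff {α β : Type*} (c : α → β) (a b : α) :
    (∃ x y, s(a, b) = s(x, y) ∧ c x ≠ c y) ↔ c a ≠ c b := by
  refine ⟨?_, fun h => ⟨a, b, rfl, h⟩⟩
  rintro ⟨x, y, hxy, hne⟩
  rcases Sym2.eq_iff.1 hxy with ⟨rfl, rfl⟩ | ⟨rfl, rfl⟩
  · exact hne
  · exact hne.symm

lemma cutSize_eq_card_of_enum {ι : Type*} [Fintype ι] (H : SimpleGraph W) (u v : ι → W)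
    (hadj : ∀ x, H.Adj (u x) (v x)) (hsurj : ∀ e ∈ H.edgeSet, ∃ x, s(u x, v x) = e)
    (hinj : ∀ x y, s(u x, v x) = s(u y, v y) → x = y) (c : W → Bool) :
    cutSize H c = #{x | c (u x) ≠ c (v x)} := by
  classical
  rw [cutSize]
  refine (card_bij (fun x _ => s(u x, v x)) ?_ (fun x _ y _ h => hinj x y h) ?_).symm
  · intro x hx
    simp only [mem_filter, mem_univ, true_and] at hx ⊢
    exact ⟨hadj x, (exists_mk_eq_and_ne_iff c _ _).2 hx⟩
  · intro e he
    simp only [mem_filter, mem_univ, true_and] at he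
    obtain ⟨x, rfl⟩ := hsurj e he.1
    exact ⟨x, by simpa using (exists_mk_eq_and_ne_iff c _ _).1 he.2, rfl⟩

lemma cutSize_eq_sum_of_enum {m : ℕ} (H : SimpleGraph W) (ep : Fin m → W × W)
    (hep : ∀ i, H.Adj (ep i).1 (ep i).2)
    (hsurj : ∀ a b, H.Adj a b → ∃ i, ep i = (a, b) ∨ ep i = (b, a))
    (hinj : ∀ i j, (ep i = ep j ∨ ep i = ((ep j).2, (ep j).1)) → i = j) (c : W → Bool) :
    cutSize H c = ∑ i : Fin m, if c (ep i).1 ≠ c (ep i).2 then 1 else 0 := by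
  classical
  rw [cutSize_eq_card_of_enum H (fun i => (ep i).1) (fun i => (ep i).2) hep ?_ ?_, card_filter]
  · intro e he
    induction e using Sym2.ind with
    | _ a b =>
    obtain ⟨i, hi | hi⟩ := hsurj a b he
    · exact ⟨i, by rw [hi]⟩
    · exact ⟨i, by rw [hi, Sym2.eq_swap]⟩
  · intro i j h
    rcases Sym2.eq_iff.1 h with ⟨h1, h2⟩ | ⟨h1, h2⟩
    · exact hinj i j (Or.inl (Prod.ext h1 h2))
    · exact hinj i j (Or.inr (Prod.ext h1 h2))

end MaxCut

section ColorChanges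

variable (f : ℕ → Bool)

lemma sum_range_ne_succ_mod_two (n : ℕ) :
    (∑ k ∈ range n, if f k ≠ f (k + 1) then 1 else 0) % 2 = if f 0 ≠ f n then 1 else 0 := by
  induction n with
  | zero => simp
  | succ n ih =>
    rw [sum_range_succ, Nat.add_mod, ih]
    cases f 0 <;> cases f n <;> cases f (n + 1) <;> simp

lemma sum_range_ne_succ_le (n : ℕ) :
    ∑ k ∈ range (2 * n + 1), (if f k ≠ f (k + 1) then 1 else 0) ≤
      2 * n + if f 0 ≠ f (2 * n + 1) then 1 else 0 := by
  have hpar := sum_range_ne_succ_mod_two f (2 * n + 1)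
  have hle : ∑ k ∈ range (2 * n + 1), (if f k ≠ f (k + 1) then 1 else 0) ≤ 2 * n + 1 :=
    calc _ ≤ ∑ _k ∈ range (2 * n + 1), 1 := sum_le_sum fun k _ => by split_ifs <;> simp
      _ = 2 * n + 1 := by simp
  split_ifs at hpar ⊢ <;> omega

end ColorChanges

lemma sum_fin_two_mul_succ (m : ℕ) : ∑ i : Fin m, 2 * ((i : ℕ) + 1) = m * (m + 1) := by
  rw [Fin.sum_univ_eq_sum_range (fun n => 2 * (n + 1)) m]
  induction m with
  | zero => simp
  | succ n ih => rw [sum_range_succ, ih]; ring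

namespace SubdivGraph

variable {V : Type*} {m : ℕ} (ep : Fin m → V × V)

/-- The `k`-th vertex of the path replacing the `i`-th edge, `0 ≤ k ≤ 2(i+1) + 1`. -/
def pathVert (i : Fin m) (k : ℕ) : SubdivVert V m :=
  if k = 0 then Sum.inl (ep i).1
  else if h : k - 1 < 2 * ((i : ℕ) + 1) then Sum.inr ⟨i, ⟨k - 1, h⟩⟩
  else Sum.inl (ep i).2

lemma pathVert_zero (i : Fin m) : pathVert ep i 0 = Sum.inl (ep i).1 := rfl

lemma pathVert_of_pos {i : Fin m} {k : ℕ} (h1 : 1 ≤ k) (h2 : k - 1 < 2 * ((i : ℕ) + 1)) :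
    pathVert ep i k = Sum.inr ⟨i, ⟨k - 1, h2⟩⟩ := by
  rw [pathVert, if_neg (by omega), dif_pos h2]

lemma pathVert_last (i : Fin m) : pathVert ep i (2 * ((i : ℕ) + 1) + 1) = Sum.inl (ep i).2 := by
  rw [pathVert, if_neg (by omega), dif_neg (by omega)]

lemma inr_eq_pathVert (i : Fin m) (j : Fin (2 * ((i : ℕ) + 1))) :
    (Sum.inr ⟨i, j⟩ : SubdivVert V m) = pathVert ep i ((j : ℕ) + 1) := by
  rw [pathVert_of_pos ep (by omega) (by simp)]
  simp

lemma eq_of_pathVert_eq_inr {i i' : Fin m} {k : ℕ} {j : Fin (2 * ((i' : ℕ) + 1))}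
    (h : pathVert ep i k = Sum.inr ⟨i', j⟩) : i = i' := by
  rw [pathVert] at h
  split_ifs at h
  simp only [Sum.inr.injEq, Sigma.mk.injEq] at h
  exact h.1

lemma pathVert_injOn (i : Fin m) (hne : (ep i).1 ≠ (ep i).2) {k k' : ℕ}
    (hk : k ≤ 2 * ((i : ℕ) + 1) + 1) (hk' : k' ≤ 2 * ((i : ℕ) + 1) + 1)
    (h : pathVert ep i k = pathVert ep i k') : k = k' := by
  rw [pathVert, pathVert] at h
  split_ifs at h <;> simp_all <;> omega

lemma exists_pathVert_of_subdivRel {a b : SubdivVert V m} (h : subdivRel m ep a b) :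
    ∃ i : Fin m, ∃ k : Fin (2 * ((i : ℕ) + 1) + 1),
      s(pathVert ep i k, pathVert ep i (k + 1)) = s(a, b) := by
  match a, b, h with
  | Sum.inl _, Sum.inr ⟨i, j⟩, Or.inl ⟨rfl, hj⟩ =>
    refine ⟨i, ⟨0, by omega⟩, ?_⟩
    rw [inr_eq_pathVert ep i j, hj]
    rfl
  | Sum.inl _, Sum.inr ⟨i, j⟩, Or.inr ⟨rfl, hj⟩ =>
    refine ⟨i, ⟨2 * ((i : ℕ) + 1), by omega⟩, ?_⟩
    rw [inr_eq_pathVert ep i j, hj, Nat.sub_add_cancel (by omega), ← pathVert_last, Sym2.eq_swap]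
  | Sum.inr ⟨i, j⟩, Sum.inr ⟨i', j'⟩, ⟨hi, hj⟩ =>
    obtain rfl : i = i' := Fin.ext hi
    refine ⟨i, ⟨j + 1, by omega⟩, ?_⟩
    show s(pathVert ep i (j + 1), pathVert ep i (j + 1 + 1)) = _
    rw [inr_eq_pathVert ep i j, inr_eq_pathVert ep i j', hj]

lemma exists_pathVert_eq {e : Sym2 (SubdivVert V m)} (he : e ∈ (subdivGraph m ep).edgeSet) :
    ∃ i : Fin m, ∃ k : Fin (2 * ((i : ℕ) + 1) + 1),
      s(pathVert ep i k, pathVert ep i (k + 1)) = e := by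
  induction e using Sym2.ind with
  | _ a b =>
  rw [SimpleGraph.mem_edgeSet, subdivGraph, SimpleGraph.fromRel_adj] at he
  rcases he.2 with h | h
  · exact exists_pathVert_of_subdivRel ep h
  · rw [Sym2.eq_swap]
    exact exists_pathVert_of_subdivRel ep h

/-- Internal vertex `j` of path `i` is `pathVert ep i (j + 1)`: colors alternate from `(ep i).1`. -/
def alternatingExtension (c : V → Bool) : SubdivVert V m → Bool :=
  Sum.elim c fun s => xor (c (ep s.1).1) (decide ((s.2 : ℕ) % 2 = 0))

lemma alternatingExtension_pathVert (c : V → Bool) (i : Fin m) {k : ℕ}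
    (hk : k ≤ 2 * ((i : ℕ) + 1)) :
    alternatingExtension ep c (pathVert ep i k) = xor (c (ep i).1) (decide (k % 2 = 1)) := by
  rcases Nat.eq_zero_or_pos k with rfl | hpos
  · simp [pathVert_zero, alternatingExtension]
  · rw [pathVert_of_pos ep hpos (by omega)]
    have hpar : (k - 1) % 2 = 0 ↔ k % 2 = 1 := by omega
    simp [alternatingExtension, hpar]

lemma sum_alternatingExtension_pathVert (c : V → Bool) (i : Fin m) :
    ∑ k ∈ range (2 * ((i : ℕ) + 1) + 1), (if alternatingExtension ep c (pathVert ep i k) ≠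
      alternatingExtension ep c (pathVert ep i (k + 1)) then 1 else 0) =
      2 * ((i : ℕ) + 1) + if c (ep i).1 ≠ c (ep i).2 then 1 else 0 := by
  have hinner : ∀ k ∈ range (2 * ((i : ℕ) + 1)),
      (if alternatingExtension ep c (pathVert ep i k) ≠
        alternatingExtension ep c (pathVert ep i (k + 1)) then 1 else 0) = 1 := by
    intro k hk
    rw [mem_range] at hk
    rw [alternatingExtension_pathVert ep c i hk.le, alternatingExtension_pathVert ep c i hk, if_pos]
    rcases Nat.mod_two_eq_zero_or_one k with h | h <;>
      simp [h, Nat.succ_mod_two_eq_one_iff.2, Nat.succ_mod_two_eq_zero_iff.2]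
  have hlast : alternatingExtension ep c (pathVert ep i (2 * ((i : ℕ) + 1))) = c (ep i).1 := by
    rw [alternatingExtension_pathVert ep c i le_rfl]
    simp
  rw [sum_range_succ, sum_congr rfl hinner, hlast, pathVert_last]
  simp only [sum_const, card_range, smul_eq_mul, mul_one, alternatingExtension, Sum.elim_inl]
  congr

variable {ep}
variable (hep : ∀ i, (ep i).1 ≠ (ep i).2)
include hep

lemma adj_pathVert (i : Fin m) {k : ℕ} (hk : k ≤ 2 * ((i : ℕ) + 1)) :
    (subdivGraph m ep).Adj (pathVert ep i k) (pathVert ep i (k + 1)) := by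
  refine ⟨fun h => absurd (pathVert_injOn ep i (hep i) (by omega) (by omega) h) (by omega), ?_⟩
  rcases Nat.eq_zero_or_pos k with rfl | hpos
  · rw [pathVert_zero, pathVert_of_pos ep le_rfl (by omega)]
    exact Or.inl (Or.inl ⟨rfl, rfl⟩)
  rcases hk.lt_or_eq with hk | rfl
  · rw [pathVert_of_pos ep hpos (by omega), pathVert_of_pos ep (by omega) (by omega)]
    exact Or.inl ⟨rfl, show k - 1 + 1 = k + 1 - 1 by omega⟩
  · rw [pathVert_of_pos ep hpos (by omega), pathVert_last]
    exact Or.inr (Or.inr ⟨rfl, rfl⟩)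

/-- Paths are told apart by their internal vertices: each path edge has one, since `2(i+1) > 0`. -/
lemma eq_of_pathVert_edge_eq {i i' : Fin m} {k k' : ℕ} (hk : k ≤ 2 * ((i : ℕ) + 1))
    (hk' : k' ≤ 2 * ((i' : ℕ) + 1))
    (h : s(pathVert ep i k, pathVert ep i (k + 1)) =
      s(pathVert ep i' k', pathVert ep i' (k' + 1))) :
    i = i' ∧ k = k' := by
  obtain ⟨j, hj⟩ : ∃ j : Fin (2 * ((i : ℕ) + 1)),
      Sum.inr ⟨i, j⟩ ∈ s(pathVert ep i k, pathVert ep i (k + 1)) := by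
    rcases Nat.eq_zero_or_pos k with rfl | hpos
    · exact ⟨⟨0, by omega⟩, Sym2.mem_iff.2 (Or.inr (inr_eq_pathVert ep i _))⟩
    · refine ⟨⟨k - 1, by omega⟩, Sym2.mem_iff.2 (Or.inl ?_)⟩
      rw [pathVert_of_pos ep hpos (by omega)]
  rw [h, Sym2.mem_iff] at hj
  obtain rfl : i = i' := by
    rcases hj with hj | hj <;> exact (eq_of_pathVert_eq_inr ep hj.symm).symm
  refine ⟨rfl, ?_⟩
  rcases Sym2.eq_iff.1 h with ⟨h1, -⟩ | ⟨h1, h2⟩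
  · exact pathVert_injOn ep i (hep i) (by omega) (by omega) h1
  · have := pathVert_injOn ep i (hep i) (by omega) (by omega) h1
    have := pathVert_injOn ep i (hep i) (by omega) (by omega) h2
    omega

variable [Fintype V]

lemma cutSize_eq_sum (c : SubdivVert V m → Bool) :
    cutSize (subdivGraph m ep) c = ∑ i : Fin m, ∑ k ∈ range (2 * ((i : ℕ) + 1) + 1),
      if c (pathVert ep i k) ≠ c (pathVert ep i (k + 1)) then 1 else 0 := by
  classical
  have hinj : ∀ x y : Σ i : Fin m, Fin (2 * ((i : ℕ) + 1) + 1),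
      s(pathVert ep x.1 x.2, pathVert ep x.1 (x.2 + 1)) =
        s(pathVert ep y.1 y.2, pathVert ep y.1 (y.2 + 1)) → x = y := by
    rintro ⟨i, k⟩ ⟨i', k'⟩ h
    obtain ⟨rfl, hk⟩ := eq_of_pathVert_edge_eq hep (by omega) (by omega) h
    exact Sigma.ext rfl (heq_of_eq (Fin.ext hk))
  rw [cutSize_eq_card_of_enum (ι := Σ i : Fin m, Fin (2 * ((i : ℕ) + 1) + 1)) _
    (fun x => pathVert ep x.1 x.2) (fun x => pathVert ep x.1 (x.2 + 1))
    (fun x => adj_pathVert hep x.1 (by omega))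
    (fun _ he => by simpa using exists_pathVert_eq ep he) hinj, card_filter, Fintype.sum_sigma]
  refine sum_congr rfl fun i _ => ?_
  exact Fin.sum_univ_eq_sum_range (fun k => if c (pathVert ep i k) ≠ c (pathVert ep i (k + 1))
    then 1 else 0) _

/-- By parity, a path of odd length whose ends have the same color cannot have all its edges cut. -/
lemma cutSize_le_sum_add (c : SubdivVert V m → Bool) :
    cutSize (subdivGraph m ep) c ≤
      (∑ i : Fin m, if c (Sum.inl (ep i).1) ≠ c (Sum.inl (ep i).2) then 1 else 0) +
        m * (m + 1) := by
  rw [cutSize_eq_sum hep, ← sum_fin_two_mul_succ, ← sum_add_distrib]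
  refine sum_le_sum fun i _ => ?_
  have := sum_range_ne_succ_le (fun k => c (pathVert ep i k)) ((i : ℕ) + 1)
  simp only [pathVert_zero, pathVert_last] at this
  omega

lemma cutSize_alternatingExtension (c : V → Bool) :
    cutSize (subdivGraph m ep) (alternatingExtension ep c) =
      (∑ i : Fin m, if c (ep i).1 ≠ c (ep i).2 then 1 else 0) + m * (m + 1) := by
  rw [cutSize_eq_sum hep, ← sum_fin_two_mul_succ, ← sum_add_distrib]
  refine sum_congr rfl fun i _ => ?_
  rw [sum_alternatingExtension_pathVert, add_comm]

end SubdivGraph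

theorem stmt_14_general {V : Type*} [Fintype V] (G : SimpleGraph V)
    (m : ℕ) (ep : Fin m → V × V)
    (hep : ∀ i, G.Adj (ep i).1 (ep i).2)
    (hsurj : ∀ a b : V, G.Adj a b → ∃ i, ep i = (a, b) ∨ ep i = (b, a))
    (hinj : ∀ i j, (ep i = ep j ∨ ep i = ((ep j).2, (ep j).1)) → i = j) :
    maxCut (subdivGraph m ep) = maxCut G + m * (m + 1) ∧
    (∀ c' : SubdivVert V m → Bool,
      cutSize (subdivGraph m ep) c' = maxCut (subdivGraph m ep) →
      cutSize G (fun v => c' (Sum.inl v)) = maxCut G) ∧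
    (∀ c : V → Bool, cutSize G c = maxCut G →
      ∃ c' : SubdivVert V m → Bool, (∀ v, c' (Sum.inl v) = c v) ∧
        cutSize (subdivGraph m ep) c' = maxCut (subdivGraph m ep)) := by
  have hne : ∀ i, (ep i).1 ≠ (ep i).2 := fun i => (hep i).ne
  have hG := cutSize_eq_sum_of_enum G ep hep hsurj hinj
  have hrestrict (c' : SubdivVert V m → Bool) :
      cutSize (subdivGraph m ep) c' ≤ cutSize G (fun v => c' (Sum.inl v)) + m * (m + 1) := by
    rw [hG]
    exact SubdivGraph.cutSize_le_sum_add hne c'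
  have hextend (c : V → Bool) :
      cutSize (subdivGraph m ep) (SubdivGraph.alternatingExtension ep c) =
        cutSize G c + m * (m + 1) := by
    rw [hG]
    exact SubdivGraph.cutSize_alternatingExtension hne c
  have hmax : maxCut (subdivGraph m ep) = maxCut G + m * (m + 1) :=
    maxCut_eq_add_of_le_of_eq _ _ _ _ _ hrestrict hextend
  refine ⟨hmax, fun c' hc' => ?_,
    fun c hc => ⟨SubdivGraph.alternatingExtension ep c, fun _ => rfl, ?_⟩⟩
  · have := hrestrict c'
    have := cutSize_le_maxCut G (fun v => c' (Sum.inl v))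
    omega
  · rw [hextend, hc, hmax]

/-- let `G'` be obtained from `G` by replacing the `i`-th edge
(`i = 1, …, m`) by a path through `2i` new vertices.  Then
`MaxCut(G') = MaxCut(G) + Σ_{i=1}^m 2i = MaxCut(G) + m(m+1)`; moreover, restricting
an optimal cut of `G'` to `V` gives an optimal cut of `G`, and any optimal cut of
`G` extends to an optimal cut of `G'`. -/
theorem stmt_14 {V : Type*} [Fintype V] [DecidableEq V] (G : SimpleGraph V)
    [DecidableRel G.Adj] (m : ℕ) (ep : Fin m → V × V)
    (hep : ∀ i, G.Adj (ep i).1 (ep i).2)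
    (hsurj : ∀ a b : V, G.Adj a b → ∃ i, ep i = (a, b) ∨ ep i = (b, a))
    (hinj : ∀ i j, (ep i = ep j ∨ ep i = ((ep j).2, (ep j).1)) → i = j) :
    maxCut (subdivGraph m ep) = maxCut G + m * (m + 1) ∧
    (∀ c' : SubdivVert V m → Bool,
      cutSize (subdivGraph m ep) c' = maxCut (subdivGraph m ep) →
      cutSize G (fun v => c' (Sum.inl v)) = maxCut G) ∧
    (∀ c : V → Bool, cutSize G c = maxCut G →
      ∃ c' : SubdivVert V m → Bool, (∀ v, c' (Sum.inl v) = c v) ∧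
        cutSize (subdivGraph m ep) c' = maxCut (subdivGraph m ep)) :=
  stmt_14_general G m ep hep hsurj hinj
end

section
/- Fix a finite set V and consider refinement procedures on partitions of V with respect to a simple graph G = (V, E): starting from the trivial partition {V}, at each step one may choose sets S, T in the current partition (possibly S = T) and replace S by the two (nonempty) parts {u ∈ S : |N(u) ∩ T| even} and {u ∈ S : |N(u) ∩ T| odd}, whenever both parts are nonempty. Then every maximal refinement procedure (one that stops only when no further split is possible) terminates at the same partition, namely the BFS partition obtained by simultaneously refining by the parity of neighborhoods in all current parts at every round. -/
variable {V : Type*} [Fintype V] [DecidableEq V]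

/-- The parity class of `u` inside `S` with respect to the partition `P`: the set of
`w ∈ S` whose neighborhood has, in every part `T ∈ P`, the same parity as that of
`u`. -/
def parityClass (G : SimpleGraph V) [DecidableRel G.Adj]
    (P : Finset (Finset V)) (S : Finset V) (u : V) : Finset V :=
  S.filter fun w => ∀ T ∈ P,
    (G.neighborFinset u ∩ T).card % 2 = (G.neighborFinset w ∩ T).card % 2

/-- One round of the BFS-splitting procedure: refine every part of `P`
simultaneously by the parities of neighborhoods in all current parts. -/
def bfsStep (G : SimpleGraph V) [DecidableRel G.Adj]
    (P : Finset (Finset V)) : Finset (Finset V) :=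
  P.biUnion fun S => S.image fun u => parityClass G P S u

/-- One step of a general refinement procedure: choose parts `S, T` of `P`
(possibly `S = T`), and split `S` into its even and odd parts with respect to
neighborhood parities in `T`, provided both parts are nonempty. -/
def splitStep (G : SimpleGraph V) [DecidableRel G.Adj]
    (P Q : Finset (Finset V)) : Prop :=
  ∃ S ∈ P, ∃ T ∈ P,
    (S.filter fun w => (G.neighborFinset w ∩ T).card % 2 = 0).Nonempty ∧
    (S.filter fun w => (G.neighborFinset w ∩ T).card % 2 = 1).Nonempty ∧
    Q = insert (S.filter fun w => (G.neighborFinset w ∩ T).card % 2 = 0)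
          (insert (S.filter fun w => (G.neighborFinset w ∩ T).card % 2 = 1)
            (P.erase S))

namespace Stmt15Aux

/-- parity of the neighborhood of `w` inside `T` -/
def par (G : SimpleGraph V) [DecidableRel G.Adj] (w : V) (T : Finset V) : ℕ :=
  (G.neighborFinset w ∩ T).card % 2

/-- `Q` is a partition of `V`. -/
def IsPart (Q : Finset (Finset V)) : Prop :=
  (∀ A ∈ Q, A.Nonempty) ∧
  (∀ A ∈ Q, ∀ B ∈ Q, A ≠ B → Disjoint A B) ∧
  (∀ v : V, ∃ A ∈ Q, v ∈ A)

/-- `Q` is stable: parities are constant on parts. -/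
def Stable (G : SimpleGraph V) [DecidableRel G.Adj] (Q : Finset (Finset V)) : Prop :=
  ∀ S ∈ Q, ∀ T ∈ Q, ∀ x ∈ S, ∀ y ∈ S, par G x T = par G y T

/-- `T` is a union of parts of `Q`. -/
def Sat (Q : Finset (Finset V)) (T : Finset V) : Prop :=
  ∀ A ∈ Q, ∀ x ∈ A, ∀ y ∈ A, (x ∈ T ↔ y ∈ T)

variable (G : SimpleGraph V) [DecidableRel G.Adj]

lemma mem_parityClass {Q : Finset (Finset V)} {S : Finset V} {u w : V} :
    w ∈ parityClass G Q S u ↔ w ∈ S ∧ ∀ T ∈ Q, par G u T = par G w T := by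
  simp [parityClass, par]

lemma mem_bfsStep {Q : Finset (Finset V)} {A : Finset V} :
    A ∈ bfsStep G Q ↔ ∃ S ∈ Q, ∃ u ∈ S, A = parityClass G Q S u := by
  simp only [bfsStep, Finset.mem_biUnion, Finset.mem_image, eq_comm]

/-- KEY: if `Q` is a stable partition and `T` is a union of parts of `Q`, then the
parity of neighborhoods in `T` is constant on parts of `Q`. -/
lemma par_eq_of_sat {Q : Finset (Finset V)} {T A : Finset V} {x y : V}
    (hQ : IsPart Q) (hst : Stable G Q) (hT : Sat Q T)
    (hA : A ∈ Q) (hx : x ∈ A) (hy : y ∈ A) : par G x T = par G y T := by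
  have hTeq : T = (Q.filter (· ⊆ T)).biUnion id := by
    ext t
    simp only [Finset.mem_biUnion, Finset.mem_filter, id]
    constructor
    · intro ht
      obtain ⟨A', hA', htA'⟩ := hQ.2.2 t
      exact ⟨A', ⟨hA', fun s hs => (hT A' hA' s hs t htA').mpr ht⟩, htA'⟩
    · rintro ⟨A', ⟨_, hsub⟩, ht⟩; exact hsub ht
  have key : ∀ w : V, par G w T =
      (∑ A' ∈ Q.filter (· ⊆ T), (G.neighborFinset w ∩ A').card % 2) % 2 := by
    intro w
    have hdisj : ∀ A' ∈ Q.filter (· ⊆ T), ∀ B' ∈ Q.filter (· ⊆ T), A' ≠ B' →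
        Disjoint (G.neighborFinset w ∩ A') (G.neighborFinset w ∩ B') := by
      intro A' hA' B' hB' hne
      exact ((hQ.2.1 A' (Finset.mem_filter.1 hA').1 B' (Finset.mem_filter.1 hB').1
        hne).mono inf_le_right inf_le_right)
    have hcard : (G.neighborFinset w ∩ T).card =
        ∑ A' ∈ Q.filter (· ⊆ T), (G.neighborFinset w ∩ A').card := by
      conv_lhs => rw [hTeq, Finset.inter_biUnion]
      simp only [id]
      exact Finset.card_biUnion hdisj
    rw [par, hcard, Finset.sum_nat_mod]
  rw [key x, key y]
  congr 1
  refine Finset.sum_congr rfl fun A' hA' => ?_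
  exact hst A hA A' (Finset.mem_filter.1 hA').1 x hx y hy

lemma stable_of_term {P : Finset (Finset V)} (hterm : ∀ Q, ¬ splitStep G P Q) :
    Stable G P := by
  intro S hS T hT x hx y hy
  by_contra hne
  rcases Nat.mod_two_eq_zero_or_one (G.neighborFinset x ∩ T).card with h1 | h1 <;>
    rcases Nat.mod_two_eq_zero_or_one (G.neighborFinset y ∩ T).card with h2 | h2
  · exact hne (by rw [par, par, h1, h2])
  · exact hterm _ ⟨S, hS, T, hT, ⟨x, Finset.mem_filter.2 ⟨hx, h1⟩⟩,
      ⟨y, Finset.mem_filter.2 ⟨hy, h2⟩⟩, rfl⟩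
  · exact hterm _ ⟨S, hS, T, hT, ⟨y, Finset.mem_filter.2 ⟨hy, h2⟩⟩,
      ⟨x, Finset.mem_filter.2 ⟨hx, h1⟩⟩, rfl⟩
  · exact hne (by rw [par, par, h1, h2])

lemma isPart_bfsStep {Q : Finset (Finset V)} (hQ : IsPart Q) : IsPart (bfsStep G Q) := by
  refine ⟨?_, ?_, ?_⟩
  · rintro A hA
    obtain ⟨S, hS, u, hu, rfl⟩ := (mem_bfsStep G).1 hA
    exact ⟨u, (mem_parityClass G).2 ⟨hu, fun T _ => rfl⟩⟩
  · rintro A hA B hB hne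
    obtain ⟨S, hS, u, hu, rfl⟩ := (mem_bfsStep G).1 hA
    obtain ⟨S', hS', u', hu', rfl⟩ := (mem_bfsStep G).1 hB
    by_cases hSS : S = S'
    · subst hSS
      rw [Finset.disjoint_left]
      intro a ha ha'
      obtain ⟨haS, hpa⟩ := (mem_parityClass G).1 ha
      obtain ⟨_, hpa'⟩ := (mem_parityClass G).1 ha'
      have huu' : ∀ T ∈ Q, par G u T = par G u' T :=
        fun T hT => (hpa T hT).trans (hpa' T hT).symm
      refine hne ?_
      unfold parityClass
      refine Finset.filter_congr fun w _ => ?_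
      constructor
      · intro h T hT
        exact (huu' T hT).symm.trans (h T hT)
      · intro h T hT
        exact (huu' T hT).trans (h T hT)
    · exact (hQ.2.1 S hS S' hS' hSS).mono (Finset.filter_subset _ _) (Finset.filter_subset _ _)
  · intro v
    obtain ⟨A, hA, hv⟩ := hQ.2.2 v
    exact ⟨parityClass G Q A v, (mem_bfsStep G).2 ⟨A, hA, v, hv, rfl⟩,
      (mem_parityClass G).2 ⟨hv, fun T _ => rfl⟩⟩

lemma bfsStep_eq_of_stable {Q : Finset (Finset V)} (hQ : IsPart Q) (hst : Stable G Q) :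
    bfsStep G Q = Q := by
  ext A
  rw [mem_bfsStep]
  constructor
  · rintro ⟨S, hS, u, hu, rfl⟩
    have : parityClass G Q S u = S := by
      unfold parityClass
      refine Finset.filter_true_of_mem fun w hw T hT => ?_
      exact hst S hS T hT u hu w hw
    rw [this]; exact hS
  · intro hA
    obtain ⟨u, hu⟩ := hQ.1 A hA
    refine ⟨A, hA, u, hu, ?_⟩
    unfold parityClass
    exact (Finset.filter_true_of_mem fun w hw T hT => hst A hA T hT u hu w hw).symm

lemma card_le_of_isPart {Q : Finset (Finset V)} (hQ : IsPart Q) :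
    Q.card ≤ Fintype.card V := by
  calc Q.card ≤ (Q.biUnion id).card := by
        refine Finset.card_le_card_biUnion ?_ hQ.1
        intro A hA B hB hne
        exact hQ.2.1 A hA B hB hne
      _ ≤ Fintype.card V := by
        simpa using Finset.card_le_card (Finset.subset_univ (Q.biUnion id))

lemma card_lt_bfsStep {Q : Finset (Finset V)} (hQ : IsPart Q) (hns : ¬ Stable G Q) :
    Q.card < (bfsStep G Q).card := by
  have hdisj : ∀ S ∈ Q, ∀ S' ∈ Q, S ≠ S' →
      Disjoint (S.image fun u => parityClass G Q S u)
        (S'.image fun u => parityClass G Q S' u) := by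
    intro S hS S' hS' hne
    rw [Finset.disjoint_left]
    rintro A hA hA'
    obtain ⟨u, hu, rfl⟩ := Finset.mem_image.1 hA
    obtain ⟨u', hu', heq⟩ := Finset.mem_image.1 hA'
    have h1 : u ∈ parityClass G Q S u := (mem_parityClass G).2 ⟨hu, fun T _ => rfl⟩
    have h2 : u ∈ S := ((mem_parityClass G).1 h1).1
    have h3 : u ∈ S' := by
      have := heq ▸ h1
      exact Finset.filter_subset _ _ this
    exact (Finset.disjoint_left.1 (hQ.2.1 S hS S' hS' hne) h2) h3
  have hcard : (bfsStep G Q).card = ∑ S ∈ Q, (S.image fun u => parityClass G Q S u).card :=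
    Finset.card_biUnion hdisj
  rw [hcard]
  have h1 : Q.card = ∑ _S ∈ Q, 1 := by simp
  rw [h1]
  refine Finset.sum_lt_sum (fun S hS => ?_) ?_
  · exact Nat.one_le_iff_ne_zero.2 (Finset.card_ne_zero_of_mem
      (Finset.mem_image.2 ⟨_, (hQ.1 S hS).choose_spec, rfl⟩))
  · simp only [Stable, not_forall] at hns
    obtain ⟨S, hS, T, hT, x, hx, y, hy, hne⟩ := hns
    refine ⟨S, hS, ?_⟩
    rw [Finset.one_lt_card]
    refine ⟨parityClass G Q S x, Finset.mem_image.2 ⟨x, hx, rfl⟩,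
      parityClass G Q S y, Finset.mem_image.2 ⟨y, hy, rfl⟩, ?_⟩
    intro heq
    have hyy : y ∈ parityClass G Q S y := (mem_parityClass G).2 ⟨hy, fun T _ => rfl⟩
    have hyx : y ∈ parityClass G Q S x := heq ▸ hyy
    exact hne (((mem_parityClass G).1 hyx).2 T hT)

lemma isPart_splitStep {Q Q' : Finset (Finset V)} (hQ : IsPart Q)
    (h : splitStep G Q Q') : IsPart Q' := by
  obtain ⟨S, hS, T, hT, he, ho, rfl⟩ := h
  set E := S.filter fun w => (G.neighborFinset w ∩ T).card % 2 = 0 with hE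
  set O := S.filter fun w => (G.neighborFinset w ∩ T).card % 2 = 1 with hO
  have hEO : Disjoint E O := by
    rw [Finset.disjoint_left]
    intro a ha ha'
    have h1 := (Finset.mem_filter.1 ha).2
    have h2 := (Finset.mem_filter.1 ha').2
    omega
  have hES : E ⊆ S := Finset.filter_subset _ _
  have hOS : O ⊆ S := Finset.filter_subset _ _
  have hmem : ∀ A, A ∈ insert E (insert O (Q.erase S)) ↔
      A = E ∨ A = O ∨ A ∈ Q.erase S := by
    intro A; simp [Finset.mem_insert]
  refine ⟨?_, ?_, ?_⟩
  · intro A hA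
    rcases (hmem A).1 hA with rfl | rfl | hA
    · exact he
    · exact ho
    · exact hQ.1 A (Finset.mem_of_mem_erase hA)
  · intro A hA B hB hne
    have hdS : ∀ C ∈ Q.erase S, Disjoint S C := fun C hC =>
      hQ.2.1 S hS C (Finset.mem_of_mem_erase hC) (Ne.symm (Finset.ne_of_mem_erase hC))
    rcases (hmem A).1 hA with rfl | rfl | hA' <;>
      rcases (hmem B).1 hB with rfl | rfl | hB'
    · exact absurd rfl hne
    · exact hEO
    · exact (hdS B hB').mono hES le_rfl
    · exact hEO.symm
    · exact absurd rfl hne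
    · exact (hdS B hB').mono hOS le_rfl
    · exact ((hdS A hA').mono hES le_rfl).symm
    · exact ((hdS A hA').mono hOS le_rfl).symm
    · exact hQ.2.1 A (Finset.mem_of_mem_erase hA') B (Finset.mem_of_mem_erase hB') hne
  · intro v
    obtain ⟨A, hA, hv⟩ := hQ.2.2 v
    by_cases hAS : A = S
    · subst hAS
      rcases Nat.mod_two_eq_zero_or_one (G.neighborFinset v ∩ T).card with h1 | h1
      · exact ⟨E, (hmem E).2 (Or.inl rfl), Finset.mem_filter.2 ⟨hv, h1⟩⟩
      · exact ⟨O, (hmem O).2 (Or.inr (Or.inl rfl)), Finset.mem_filter.2 ⟨hv, h1⟩⟩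
    · exact ⟨A, (hmem A).2 (Or.inr (Or.inr (Finset.mem_erase.2 ⟨hAS, hA⟩))), hv⟩

lemma isPart_iterate (hne : Nonempty V) (n : ℕ) :
    IsPart ((bfsStep G)^[n] ({Finset.univ} : Finset (Finset V))) := by
  induction n with
  | zero =>
    refine ⟨?_, ?_, ?_⟩
    · intro A hA
      rw [Function.iterate_zero_apply, Finset.mem_singleton] at hA
      subst hA; exact Finset.univ_nonempty
    · intro A hA B hB hneq
      rw [Function.iterate_zero_apply, Finset.mem_singleton] at hA hB
      exact absurd (hA.trans hB.symm) hneq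
    · intro v; exact ⟨Finset.univ, Finset.mem_singleton_self _, Finset.mem_univ v⟩
  | succ n ih =>
    rw [Function.iterate_succ_apply']
    exact isPart_bfsStep G ih

lemma stable_iterate (hne : Nonempty V) :
    Stable G ((bfsStep G)^[Fintype.card V] ({Finset.univ} : Finset (Finset V))) := by
  set b : ℕ → Finset (Finset V) := fun n => (bfsStep G)^[n] {Finset.univ} with hb
  by_contra hns
  have hstep : ∀ n, ¬ Stable G (b n) → n + 1 ≤ (b n).card := by
    intro n
    induction n with
    | zero => intro _; simp [hb]
    | succ n ih =>
      intro hns'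
      have hnsn : ¬ Stable G (b n) := by
        intro hstn
        have : b (n + 1) = b n := by
          show (bfsStep G)^[n+1] _ = _
          rw [Function.iterate_succ_apply']
          exact bfsStep_eq_of_stable G (isPart_iterate G hne n) hstn
        exact hns' (this ▸ hstn)
      have h1 := ih hnsn
      have h2 : (b n).card < (b (n + 1)).card := by
        show (b n).card < ((bfsStep G)^[n+1] _).card
        rw [Function.iterate_succ_apply']
        exact card_lt_bfsStep G (isPart_iterate G hne n) hnsn
      omega
  have h1 := hstep _ hns
  have h2 := card_le_of_isPart (Q := b (Fintype.card V)) (isPart_iterate G hne _)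
  omega

lemma sat_iterate {P : Finset (Finset V)} (hP : IsPart P) (hstP : Stable G P) (n : ℕ) :
    ∀ S ∈ (bfsStep G)^[n] ({Finset.univ} : Finset (Finset V)), Sat P S := by
  induction n with
  | zero =>
    intro S hS
    rw [Function.iterate_zero_apply, Finset.mem_singleton] at hS
    subst hS
    intro A _ x _ y _
    simp
  | succ n ih =>
    rw [Function.iterate_succ_apply']
    intro S' hS'
    obtain ⟨S, hS, u, hu, rfl⟩ := (mem_bfsStep G).1 hS'
    intro A hA x hx y hy
    rw [mem_parityClass, mem_parityClass]
    constructor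
    · rintro ⟨hxS, hpar⟩
      refine ⟨(ih S hS A hA x hx y hy).mp hxS, fun T hT => ?_⟩
      exact (hpar T hT).trans (par_eq_of_sat G hP hstP (ih T hT) hA hx hy)
    · rintro ⟨hyS, hpar⟩
      refine ⟨(ih S hS A hA x hx y hy).mpr hyS, fun T hT => ?_⟩
      exact (hpar T hT).trans (par_eq_of_sat G hP hstP (ih T hT) hA hx hy).symm

lemma sat_reach {B : Finset (Finset V)} (hB : IsPart B) (hstB : Stable G B)
    {P : Finset (Finset V)}
    (hreach : Relation.ReflTransGen (splitStep G) {Finset.univ} P) :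
    ∀ S ∈ P, Sat B S := by
  induction hreach with
  | refl =>
    intro S hS
    rw [Finset.mem_singleton] at hS
    subst hS
    intro A _ x _ y _
    simp
  | tail hsteps hstep ih =>
    obtain ⟨S, hS, T, hT, he, ho, rfl⟩ := hstep
    intro S' hS'
    rw [Finset.mem_insert, Finset.mem_insert] at hS'
    have hparTc : ∀ A ∈ B, ∀ x ∈ A, ∀ y ∈ A,
        (G.neighborFinset x ∩ T).card % 2 = (G.neighborFinset y ∩ T).card % 2 :=
      fun A hA x hx y hy => par_eq_of_sat G hB hstB (ih T hT) hA hx hy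
    rcases hS' with rfl | rfl | hS'
    · intro A hA x hx y hy
      rw [Finset.mem_filter, Finset.mem_filter]
      constructor
      · rintro ⟨hxS, hpar⟩
        exact ⟨(ih S hS A hA x hx y hy).mp hxS, (hparTc A hA x hx y hy) ▸ hpar⟩
      · rintro ⟨hyS, hpar⟩
        exact ⟨(ih S hS A hA x hx y hy).mpr hyS, (hparTc A hA x hx y hy).symm ▸ hpar⟩
    · intro A hA x hx y hy
      rw [Finset.mem_filter, Finset.mem_filter]
      constructor
      · rintro ⟨hxS, hpar⟩
        exact ⟨(ih S hS A hA x hx y hy).mp hxS, (hparTc A hA x hx y hy) ▸ hpar⟩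
      · rintro ⟨hyS, hpar⟩
        exact ⟨(ih S hS A hA x hx y hy).mpr hyS, (hparTc A hA x hx y hy).symm ▸ hpar⟩
    · exact ih S' (Finset.mem_of_mem_erase hS')

lemma isPart_reach {P : Finset (Finset V)} (hne : Nonempty V)
    (hreach : Relation.ReflTransGen (splitStep G) {Finset.univ} P) : IsPart P := by
  induction hreach with
  | refl => exact isPart_iterate G hne 0
  | tail hsteps hstep ih => exact isPart_splitStep G ih hstep

end Stmt15Aux

open Stmt15Aux in
/-- every maximal refinement procedure — i.e. every sequence of
splitting steps starting from the trivial partition `{V}` that stops only when no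
further split is possible — terminates at the same partition, namely the BFS
partition obtained by iterating simultaneous refinement. -/
theorem stmt_15 (G : SimpleGraph V) [DecidableRel G.Adj]
    (P : Finset (Finset V))
    (hreach : Relation.ReflTransGen (splitStep G) {Finset.univ} P)
    (hterm : ∀ Q, ¬ splitStep G P Q) :
    P = (bfsStep G)^[Fintype.card V] {Finset.univ} := by
  rcases isEmpty_or_nonempty V with hV | hV
  · have h0 : Fintype.card V = 0 := Fintype.card_eq_zero
    rw [h0, Function.iterate_zero_apply]
    rcases hreach.cases_head with h | ⟨c, hc, _⟩
    · exact h.symm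
    · exfalso
      obtain ⟨S, hS, T, hT, he, _, _⟩ := hc
      rw [Finset.mem_singleton] at hS
      obtain ⟨w, hw⟩ := he
      exact (IsEmpty.false w).elim
  · set B := (bfsStep G)^[Fintype.card V] ({Finset.univ} : Finset (Finset V)) with hBdef
    have hPpart : IsPart P := isPart_reach G hV hreach
    have hPstable : Stable G P := stable_of_term G hterm
    have hBpart : IsPart B := isPart_iterate G hV _
    have hBstable : Stable G B := stable_iterate G hV
    have hAB : ∀ S ∈ B, Sat P S := sat_iterate G hPpart hPstable _
    have hBA : ∀ S ∈ P, Sat B S := sat_reach G hBpart hBstable hreach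
    ext A
    constructor
    · intro hA
      obtain ⟨u, hu⟩ := hPpart.1 A hA
      obtain ⟨A', hA', hu'⟩ := hBpart.2.2 u
      have hsub1 : A' ⊆ A := fun t ht => (hBA A hA A' hA' t ht u hu').mpr hu
      have hsub2 : A ⊆ A' := fun t ht => (hAB A' hA' A hA t ht u hu).mpr hu'
      have : A = A' := Finset.Subset.antisymm hsub2 hsub1
      rw [this]; exact hA'
    · intro hA
      obtain ⟨u, hu⟩ := hBpart.1 A hA
      obtain ⟨A', hA', hu'⟩ := hPpart.2.2 u
      have hsub1 : A' ⊆ A := fun t ht => (hAB A hA A' hA' t ht u hu').mpr hu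
      have hsub2 : A ⊆ A' := fun t ht => (hBA A' hA' A hA t ht u hu).mpr hu'
      have : A = A' := Finset.Subset.antisymm hsub2 hsub1
      rw [this]; exact hA'
end

section
/- Let G ∼ G(n, 1/2) be partitioned into parts S_1, ..., S_p ⊆ V_o and T_1, ..., T_m ⊆ V_e (where V_o, V_e are the odd- and even-degree vertex sets), with the cross edges between S_1 ∪ ... ∪ S_p (excluding one designated set) and T_1 ∪ ... ∪ T_m (excluding one designated set) distributed as i.i.d. Bernoulli(1/2). Then for any fixed part S_i and any two distinct vertices u, v ∈ S_i, the probability that |N(u) ∩ T_j| ≡ |N(v) ∩ T_j| (mod 2) for all j = 1, ..., m is 2^{−m}. Consequently, by a union bound, the probability that some part S_i contains two vertices u ≠ v with matching neighborhood parities in every T_j is at most n^2 · 2^{−m}. -/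
/-! Over `𝔽₂`, the vector `(|N(u) ∩ T j| - |N(v) ∩ T j|)_j` is an additive function of the
adjacency matrix, and for `u ≠ v` it is onto: adding the single edge from `u` to a chosen
`t j ∈ T j` changes exactly the `j`-th coordinate, the blocks being disjoint. A surjective
homomorphism pushes the uniform distribution to the uniform one, so the kernel, which is the
event that `u` and `v` agree in every parity, has probability `2^{-m}`. The second estimate is
a union bound over ordered pairs. -/

open scoped ENNReal

open Finset MeasureTheory

theorem AddMonoidHom.card_ker_mul_card_of_surjective {G H : Type*} [AddGroup G] [AddGroup H]
    (φ : G →+ H) (hφ : Function.Surjective φ) :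
    Nat.card φ.ker * Nat.card H = Nat.card G := by
  rw [← φ.ker.card_mul_index, AddSubgroup.index_ker φ,
    AddMonoidHom.range_eq_top_of_surjective φ hφ, AddSubgroup.card_top]

theorem PMF.toOuterMeasure_uniformOfFintype_ker {α G H : Type*} [Fintype α] [Nonempty α]
    [AddGroup G] [AddGroup H] [Fintype H] (e : α ≃ G) (φ : G →+ H)
    (hφ : Function.Surjective φ) :
    (PMF.uniformOfFintype α).toOuterMeasure {x | φ (e x) = 0} = (Fintype.card H : ℝ≥0∞)⁻¹ := by
  classical
  have : Finite G := Finite.of_equiv α e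
  have hcard : Fintype.card {x | φ (e x) = 0} = Nat.card φ.ker :=
    (Fintype.card_eq_nat_card).trans (Nat.card_congr (e.subtypeEquiv fun x => Iff.rfl))
  have hker : Nat.card φ.ker ≠ 0 := Nat.card_pos.ne'
  rw [PMF.toOuterMeasure_uniformOfFintype_apply, hcard, Fintype.card_eq_nat_card,
    Nat.card_congr e, ← φ.card_ker_mul_card_of_surjective hφ, Nat.card_eq_fintype_card (α := H),
    Nat.cast_mul, ENNReal.div_eq_inv_mul, ENNReal.mul_inv (by simp) (by simp),
    mul_comm, ← mul_assoc, ENNReal.mul_inv_cancel (by simpa using hker) (by simp), one_mul]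

section BlockSum

variable {ι B R : Type*} [AddCommMonoid R]

def blockSum (T : ι → Finset B) : (B → R) →+ (ι → R) :=
  AddMonoidHom.pi fun j => ∑ b ∈ T j, Pi.evalAddMonoidHom (fun _ => R) b

@[simp]
theorem blockSum_apply (T : ι → Finset B) (f : B → R) (j : ι) :
    blockSum T f j = ∑ b ∈ T j, f b := by
  simp [blockSum]

theorem blockSum_surjective [Fintype ι] [DecidableEq ι] [DecidableEq B] {T : ι → Finset B}
    (hT : Pairwise fun i j => Disjoint (T i) (T j)) (hTne : ∀ j, (T j).Nonempty) :
    Function.Surjective (blockSum (R := R) T) := by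
  choose t ht using hTne
  have ht_mem : ∀ k j, t k ∈ T j ↔ k = j := fun k j =>
    ⟨fun h => by_contra fun hkj => Finset.disjoint_left.mp (hT hkj) (ht k) h, fun h => h ▸ ht k⟩
  intro s
  refine ⟨∑ k, Pi.single (t k) (s k), funext fun j => ?_⟩
  simp only [blockSum_apply, Finset.sum_apply, Finset.sum_comm (s := T j),
    Finset.sum_pi_single', ht_mem, Finset.sum_ite_eq', Finset.mem_univ, if_true]

end BlockSum

def rowDiff {A B R : Type*} [AddCommGroup R] (u v : A) : (A → B → R) →+ (B → R) :=
  Pi.evalAddMonoidHom (fun _ => B → R) u - Pi.evalAddMonoidHom (fun _ => B → R) v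

theorem rowDiff_surjective {A B R : Type*} [AddCommGroup R] [DecidableEq A] {u v : A}
    (huv : u ≠ v) : Function.Surjective (rowDiff (B := B) (R := R) u v) := fun h =>
  ⟨Pi.single u h, by simp [rowDiff, huv.symm]⟩

def boolEquivZModTwo : Bool ≃ ZMod 2 where
  toFun b := if b then 1 else 0
  invFun z := z = 1
  left_inv := by decide
  right_inv := by decide

theorem sum_boolEquivZModTwo {B : Type*} (s : Finset B) (f : B → Bool) :
    ∑ b ∈ s, boolEquivZModTwo (f b) = ((s.filter fun b => f b).card : ZMod 2) := by
  simp [boolEquivZModTwo]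

section Parity

variable {A B ι : Type*}

def adjacencyEquiv : (A → B → Bool) ≃ (A → B → ZMod 2) :=
  Equiv.piCongrRight fun _ => Equiv.piCongrRight fun _ => boolEquivZModTwo

def parityAgree (T : ι → Finset B) (u v : A) : Set (A → B → Bool) :=
  {g | ∀ j, ((T j).filter fun b => g u b).card % 2 = ((T j).filter fun b => g v b).card % 2}

theorem parityAgree_eq (T : ι → Finset B) (u v : A) :
    parityAgree T u v = {g | (blockSum T).comp (rowDiff u v) (adjacencyEquiv g) = 0} := by
  ext g
  simp only [parityAgree, Set.mem_ofPred_eq, funext_iff, Pi.zero_apply, AddMonoidHom.comp_apply,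
    blockSum_apply, rowDiff, AddMonoidHom.sub_apply, Pi.sub_apply, Pi.evalAddMonoidHom_apply,
    Finset.sum_sub_distrib, adjacencyEquiv, Equiv.piCongrRight_apply, Pi.map_apply,
    sum_boolEquivZModTwo, sub_eq_zero, ZMod.natCast_eq_natCast_iff']

variable [Fintype A] [DecidableEq A] [Fintype B] [DecidableEq B] [Fintype ι] [DecidableEq ι]

theorem toOuterMeasure_uniformOfFintype_parityAgree
    {T : ι → Finset B} (hT : Pairwise fun i j => Disjoint (T i) (T j))
    (hTne : ∀ j, (T j).Nonempty) {u v : A} (huv : u ≠ v) :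
    (PMF.uniformOfFintype (A → B → Bool)).toOuterMeasure (parityAgree T u v)
      = (1 / 2 : ℝ≥0∞) ^ Fintype.card ι := by
  rw [parityAgree_eq, PMF.toOuterMeasure_uniformOfFintype_ker _ _
    ((blockSum_surjective hT hTne).comp (rowDiff_surjective huv))]
  simp [ZMod.card, ENNReal.inv_pow]

theorem toOuterMeasure_uniformOfFintype_exists_parityAgree_le
    {T : ι → Finset B} (hT : Pairwise fun i j => Disjoint (T i) (T j))
    (hTne : ∀ j, (T j).Nonempty) :
    (PMF.uniformOfFintype (A → B → Bool)).toOuterMeasure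
        {g | ∃ u v, u ≠ v ∧ g ∈ parityAgree T u v}
      ≤ (Fintype.card A : ℝ≥0∞) ^ 2 * (1 / 2 : ℝ≥0∞) ^ Fintype.card ι := by
  set μ := (PMF.uniformOfFintype (A → B → Bool)).toOuterMeasure
  have hunion : {g | ∃ u v, u ≠ v ∧ g ∈ parityAgree T u v}
      = ⋃ q ∈ (univ : Finset A).offDiag, parityAgree T q.1 q.2 := by
    ext g
    simp
  have hpairs : ((univ : Finset A).offDiag.card : ℝ≥0∞) ≤ (Fintype.card A : ℝ≥0∞) ^ 2 := by
    norm_cast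
    rw [offDiag_card, card_univ, sq]
    exact Nat.sub_le _ _
  calc μ {g | ∃ u v, u ≠ v ∧ g ∈ parityAgree T u v}
      ≤ ∑ q ∈ (univ : Finset A).offDiag, μ (parityAgree T q.1 q.2) :=
        hunion ▸ measure_biUnion_finset_le _ _
    _ = (univ : Finset A).offDiag.card * (1 / 2 : ℝ≥0∞) ^ Fintype.card ι := by
        rw [sum_congr rfl fun q hq => toOuterMeasure_uniformOfFintype_parityAgree hT hTne
          (mem_offDiag.1 hq).2.2, sum_const, nsmul_eq_mul]
    _ ≤ (Fintype.card A : ℝ≥0∞) ^ 2 * (1 / 2 : ℝ≥0∞) ^ Fintype.card ι := by gcongr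

end Parity

theorem stmt_16_general {A B : Type*} [Fintype A] [DecidableEq A] [Fintype B] [DecidableEq B]
    (p m n : ℕ) (S : Fin p → Finset A) (T : Fin m → Finset B)
    (hT : ∀ i j, i ≠ j → Disjoint (T i) (T j))
    (hTne : ∀ j, (T j).Nonempty)
    (hn : Fintype.card A ≤ n) :
    (∀ i : Fin p, ∀ u ∈ S i, ∀ v ∈ S i, u ≠ v →
      (PMF.uniformOfFintype (A → B → Bool)).toOuterMeasure
          {g | ∀ j : Fin m,
            ((T j).filter fun b => g u b).card % 2 = ((T j).filter fun b => g v b).card % 2}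
        = (1 / 2 : ℝ≥0∞) ^ m) ∧
    (PMF.uniformOfFintype (A → B → Bool)).toOuterMeasure
        {g | ∃ i : Fin p, ∃ u ∈ S i, ∃ v ∈ S i, u ≠ v ∧ ∀ j : Fin m,
          ((T j).filter fun b => g u b).card % 2 = ((T j).filter fun b => g v b).card % 2}
      ≤ (n : ℝ≥0∞) ^ 2 * (1 / 2 : ℝ≥0∞) ^ m := by
  refine ⟨fun i u _ v _ huv => ?_, ?_⟩
  · have h := toOuterMeasure_uniformOfFintype_parityAgree hT hTne huv
    rwa [Fintype.card_fin] at h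
  · have hsub : {g : A → B → Bool | ∃ i : Fin p, ∃ u ∈ S i, ∃ v ∈ S i, u ≠ v ∧ ∀ j : Fin m,
          ((T j).filter fun b => g u b).card % 2 = ((T j).filter fun b => g v b).card % 2}
        ⊆ {g | ∃ u v, u ≠ v ∧ g ∈ parityAgree T u v} :=
      fun g ⟨_, u, _, v, _, huv, hg⟩ => ⟨u, v, huv, hg⟩
    calc _ ≤ _ := measure_mono hsub
      _ ≤ _ := toOuterMeasure_uniformOfFintype_exists_parityAgree_le hT hTne
      _ ≤ (n : ℝ≥0∞) ^ 2 * (1 / 2 : ℝ≥0∞) ^ m := by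
        rw [Fintype.card_fin]
        gcongr ?_ * _
        exact_mod_cast Nat.pow_le_pow_left hn 2

/-- let the cross edges between vertex sets `A` and `B` be i.i.d.
Bernoulli(1/2) (i.e. a uniformly random `g : A → B → Bool`).  Let `S 1, …, S p` be
pairwise disjoint subsets of `A` and `T 1, …, T m` pairwise disjoint nonempty
subsets of `B`.  Then for any part `S i` and distinct `u, v ∈ S i`, the probability
that `|N(u) ∩ T j| ≡ |N(v) ∩ T j| (mod 2)` for every `j` is exactly `2^{−m}`; and,
by a union bound, the probability that some part contains two distinct vertices
with matching neighborhood parities in every `T j` is at most `n² · 2^{−m}`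
(where `n ≥ |A|`). -/
theorem stmt_16 {A B : Type*} [Fintype A] [DecidableEq A] [Fintype B] [DecidableEq B]
    (p m n : ℕ) (S : Fin p → Finset A) (T : Fin m → Finset B)
    (hS : ∀ i j, i ≠ j → Disjoint (S i) (S j))
    (hT : ∀ i j, i ≠ j → Disjoint (T i) (T j))
    (hTne : ∀ j, (T j).Nonempty)
    (hn : Fintype.card A ≤ n) :
    (∀ i : Fin p, ∀ u ∈ S i, ∀ v ∈ S i, u ≠ v →
      (PMF.uniformOfFintype (A → B → Bool)).toOuterMeasure
          {g | ∀ j : Fin m,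
            ((T j).filter fun b => g u b).card % 2 = ((T j).filter fun b => g v b).card % 2}
        = (1 / 2 : ℝ≥0∞) ^ m) ∧
    (PMF.uniformOfFintype (A → B → Bool)).toOuterMeasure
        {g | ∃ i : Fin p, ∃ u ∈ S i, ∃ v ∈ S i, u ≠ v ∧ ∀ j : Fin m,
          ((T j).filter fun b => g u b).card % 2 = ((T j).filter fun b => g v b).card % 2}
      ≤ (n : ℝ≥0∞) ^ 2 * (1 / 2 : ℝ≥0∞) ^ m :=
  stmt_16_general p m n S T hT hTne hn
end

section
/- Let X and Z be the 2×2 Pauli matrices and let H ∈ u(2^n) be any element of the real Lie algebra generated by i·Σ_{u∈V} X_u and i·Σ_{(u,v)∈E} Z_u Z_v for a simple graph G = (V, E). Then for every graph automorphism π ∈ Aut(G), the qubit-permutation action of π fixes H; that is, permuting the tensor factors of H according to π returns H. Consequently, if for every vertex u the single operator i X_u lies in the DLA, then Aut(G) is trivial. -/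
attribute [local instance 100] LieRing.ofAssociativeRing

/-- The QAOA-MaxCut dynamical Lie algebra of an unweighted graph `G`: the real Lie
algebra generated by `i·H_m` and `i·H_p`. -/
noncomputable def dla {V : Type*} [Fintype V] [DecidableEq V] (G : SimpleGraph V)
    [DecidableRel G.Adj] : LieSubalgebra ℝ (Matrix (V → Bool) (V → Bool) ℂ) :=
  LieSubalgebra.lieSpan ℝ _
    {Complex.I • ∑ u : V, PX u, Complex.I • ∑ e ∈ G.edgeFinset, PZZ e}

/-- The action of a permutation `π` of the qubits on a matrix: permute the tensor
factors, i.e. reindex both computational-basis indices by precomposition with `π`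
(this sends the Pauli string `P_1 ⊗ ⋯ ⊗ P_n` to `P_{π(1)} ⊗ ⋯ ⊗ P_{π(n)}`). -/
noncomputable def qubitPerm {V : Type*} [Fintype V] [DecidableEq V] (π : Equiv.Perm V)
    (M : Matrix (V → Bool) (V → Bool) ℂ) : Matrix (V → Bool) (V → Bool) ℂ :=
  M.submatrix (fun s => s ∘ π) (fun t => t ∘ π)

/-!
Permuting the qubits by `π` is the conjugation of matrices by the permutation `s ↦ s ∘ π` of
the computational basis, hence an algebra automorphism and in particular a Lie algebra
automorphism. It sends `X_u` to `X_{π u}` and `Z_u Z_v` to `Z_{π u} Z_{π v}`, so for a graph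
automorphism it fixes both generators of the DLA; a Lie homomorphism that agrees with the
identity on a generating set agrees with it on the whole Lie span. If every `i X_u` lies in the
DLA, then `X_{π u} = X_u` for all `u`, and `u ↦ X_u` is injective, so `π = 1`.
-/

theorem LieHom.eqOn_lieSpan {R L L' : Type*} [CommRing R] [LieRing L] [LieAlgebra R L]
    [LieRing L'] [LieAlgebra R L'] {f g : L →ₗ⁅R⁆ L'} {s : Set L} (h : Set.EqOn f g s) :
    Set.EqOn f g (LieSubalgebra.lieSpan R L s) := by
  intro x hx
  induction hx using LieSubalgebra.lieSpan_induction with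
  | mem x hx => exact h hx
  | zero => simp only [map_zero]
  | add x y _ _ hx hy => simp only [map_add, hx, hy]
  | smul a x _ hx => simp only [map_smul, hx]
  | lie x y _ _ hx hy => simp only [LieHom.map_lie, hx, hy]

section

variable {V : Type*} [Fintype V] [DecidableEq V]

noncomputable def qubitPermAlgEquiv (R : Type*) [CommSemiring R] [Algebra R ℂ]
    (π : Equiv.Perm V) :
    Matrix (V → Bool) (V → Bool) ℂ ≃ₐ[R] Matrix (V → Bool) (V → Bool) ℂ :=
  Matrix.reindexAlgEquiv R ℂ (π.arrowCongr (Equiv.refl Bool))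

theorem qubitPerm_mul (π : Equiv.Perm V) (A B : Matrix (V → Bool) (V → Bool) ℂ) :
    qubitPerm π (A * B) = qubitPerm π A * qubitPerm π B :=
  map_mul (qubitPermAlgEquiv ℂ π) A B

theorem qubitPerm_smul (π : Equiv.Perm V) (c : ℂ) (M : Matrix (V → Bool) (V → Bool) ℂ) :
    qubitPerm π (c • M) = c • qubitPerm π M :=
  map_smul (qubitPermAlgEquiv ℂ π) c M

theorem qubitPerm_sum (π : Equiv.Perm V) {ι : Type*} (s : Finset ι)
    (f : ι → Matrix (V → Bool) (V → Bool) ℂ) :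
    qubitPerm π (∑ i ∈ s, f i) = ∑ i ∈ s, qubitPerm π (f i) :=
  map_sum (qubitPermAlgEquiv ℂ π) f s

theorem qubitPerm_PX (π : Equiv.Perm V) (u : V) : qubitPerm π (PX u) = PX (π u) := by
  ext s t
  have hupdate :
      Function.update t (π u) (!t (π u)) ∘ π = Function.update (t ∘ π) u (!t (π u)) :=
    Function.update_comp_eq_of_injective t π.injective u _
  simp only [qubitPerm, PX, Matrix.submatrix_apply, Function.comp_apply, ← hupdate,
    π.surjective.injective_comp_right.eq_iff]

theorem qubitPerm_PZ (π : Equiv.Perm V) (u : V) : qubitPerm π (PZ u) = PZ (π u) := by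
  ext s t
  simp only [qubitPerm, PZ, Matrix.submatrix_apply, Matrix.diagonal_apply,
    π.surjective.injective_comp_right.eq_iff, Function.comp_apply]

theorem qubitPerm_PZZ (π : Equiv.Perm V) (e : Sym2 V) :
    qubitPerm π (PZZ e) = PZZ (e.map π) := by
  induction e using Sym2.ind with
  | _ a b =>
    change qubitPerm π (PZ a * PZ b) = PZ (π a) * PZ (π b)
    rw [qubitPerm_mul, qubitPerm_PZ, qubitPerm_PZ]

theorem qubitPerm_sum_PX (π : Equiv.Perm V) :
    qubitPerm π (∑ u : V, PX u) = ∑ u : V, PX u := by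
  simp only [qubitPerm_sum, qubitPerm_PX]
  exact Equiv.sum_comp π PX

theorem qubitPerm_sum_PZZ (G : SimpleGraph V) [DecidableRel G.Adj] (φ : G ≃g G) :
    qubitPerm φ.toEquiv (∑ e ∈ G.edgeFinset, PZZ e) = ∑ e ∈ G.edgeFinset, PZZ e := by
  simp only [qubitPerm_sum, qubitPerm_PZZ]
  refine Finset.sum_nbij' (Sym2.map φ) (Sym2.map φ.symm) ?_ ?_ ?_ ?_ fun _ _ => rfl
  · intro e he
    simpa [φ.map_mem_edgeSet_iff] using he
  · intro e he
    simpa [φ.symm.map_mem_edgeSet_iff] using he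
  · intro e _
    simp [Sym2.map_map]
  · intro e _
    simp [Sym2.map_map]

theorem qubitPerm_eq_self_of_mem_dla (G : SimpleGraph V) [DecidableRel G.Adj] (φ : G ≃g G)
    {H : Matrix (V → Bool) (V → Bool) ℂ} (hH : H ∈ dla G) : qubitPerm φ.toEquiv H = H := by
  have hgenerators : Set.EqOn (qubitPermAlgEquiv ℝ φ.toEquiv).toLieEquiv.toLieHom
      (LieHom.id : _ →ₗ⁅ℝ⁆ Matrix (V → Bool) (V → Bool) ℂ)
      {Complex.I • ∑ u : V, PX u, Complex.I • ∑ e ∈ G.edgeFinset, PZZ e} := by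
    rintro _ (rfl | rfl)
    · exact (qubitPerm_smul _ _ _).trans (congrArg _ (qubitPerm_sum_PX _))
    · exact (qubitPerm_smul _ _ _).trans (congrArg _ (qubitPerm_sum_PZZ G φ))
  exact LieHom.eqOn_lieSpan hgenerators hH

theorem PX_injective : Function.Injective (PX : V → Matrix (V → Bool) (V → Bool) ℂ) := by
  intro u v h
  have hentry := congrFun (congrFun h (Function.update (fun _ => false) u true)) fun _ => false
  have hupdate :
      Function.update (fun _ => false) u true = Function.update (fun _ => false) v true := by
    by_contra hne
    simp [PX, hne] at hentry
  simpa [Function.update_apply] using congrFun hupdate u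

end

/-- every element of the QAOA-MaxCut DLA is fixed by the
qubit-permutation action of every automorphism of `G`; consequently, if `i X_u`
lies in the DLA for every vertex `u`, then `Aut(G)` is trivial. -/
theorem stmt_19 {V : Type*} [Fintype V] [DecidableEq V] (G : SimpleGraph V)
    [DecidableRel G.Adj] :
    (∀ π : Equiv.Perm V, (∀ a b : V, G.Adj (π a) (π b) ↔ G.Adj a b) →
      ∀ H ∈ dla G, qubitPerm π H = H) ∧
    ((∀ u : V, Complex.I • PX u ∈ dla G) →
      ∀ π : Equiv.Perm V, (∀ a b : V, G.Adj (π a) (π b) ↔ G.Adj a b) →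
        π = Equiv.refl V) := by
  have fixed : ∀ π : Equiv.Perm V, (∀ a b : V, G.Adj (π a) (π b) ↔ G.Adj a b) →
      ∀ H ∈ dla G, qubitPerm π H = H :=
    fun π hπ _ hH => qubitPerm_eq_self_of_mem_dla G ⟨π, hπ _ _⟩ hH
  refine ⟨fixed, fun hX π hπ => Equiv.ext fun u => PX_injective ?_⟩
  have hfixed := fixed π hπ _ (hX u)
  rw [qubitPerm_smul, qubitPerm_PX] at hfixed
  exact smul_right_injective _ Complex.I_ne_zero hfixed
end
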